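/- arXiv:2105.08434 — 3 statements merged into one kernel-verified Lean document; each statement's English description precedes it below -/
import Mathlib

section
/- Let α ∈ (0,π) and let σ : ℝ → ℝ be smooth with σ'(r) = 0 for all r ∉ (−1,1). Suppose v : ℝ × [0,∞) → ℝ is smooth and satisfies: (i) −div(A_α ∇v) + f'(v) = 0 in ℝ × (0,∞); (ii) N_{∂ℝ²₊} · A_α ∇v(R,0) + σ'(v(R,0)) = 0 for all R ∈ ℝ; (iii) for all k, l ∈ ℕ₀ there are c, C > 0 such that |∂_R^k ∂_H^l(v(R,H) − θ₀(R))| ≤ C e^{−c(|R|+H)} for all (R,H) ∈ ℝ × [0,∞). Then cos α = (σ(−1) − σ(1)) / ∫_ℝ (θ₀'(R))² dR. -/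
open Filter Topology MeasureTheory Real

open Set

noncomputable def d1 (G : ℝ × ℝ → ℝ) : ℝ × ℝ → ℝ := fun p => fderiv ℝ G p (1, 0)
noncomputable def d2 (G : ℝ × ℝ → ℝ) : ℝ × ℝ → ℝ := fun p => fderiv ℝ G p (0, 1)

lemma hasDerivAt_slice1 {G : ℝ × ℝ → ℝ} (hG : Differentiable ℝ G) (R H : ℝ) :
    HasDerivAt (fun r => G (r, H)) (d1 G (R, H)) R := by
  have h1 : HasDerivAt (fun r : ℝ => (r, H)) ((1:ℝ), (0:ℝ)) R :=
    (hasDerivAt_id R).prodMk (hasDerivAt_const R H)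
  exact (hG (R, H)).hasFDerivAt.comp_hasDerivAt R h1

lemma hasDerivAt_slice2 {G : ℝ × ℝ → ℝ} (hG : Differentiable ℝ G) (R H : ℝ) :
    HasDerivAt (fun h => G (R, h)) (d2 G (R, H)) H := by
  have h1 : HasDerivAt (fun h : ℝ => (R, h)) ((0:ℝ), (1:ℝ)) H :=
    (hasDerivAt_const H R).prodMk (hasDerivAt_id H)
  exact (hG (R, H)).hasFDerivAt.comp_hasDerivAt H h1

lemma contDiff_d1 {G : ℝ × ℝ → ℝ} (hG : ContDiff ℝ (⊤ : ℕ∞) G) : ContDiff ℝ (⊤ : ℕ∞) (d1 G) :=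
  (ContinuousLinearMap.apply ℝ ℝ ((1:ℝ), (0:ℝ))).contDiff.comp (hG.fderiv_right (by simp))

lemma contDiff_d2 {G : ℝ × ℝ → ℝ} (hG : ContDiff ℝ (⊤ : ℕ∞) G) : ContDiff ℝ (⊤ : ℕ∞) (d2 G) :=
  (ContinuousLinearMap.apply ℝ ℝ ((0:ℝ), (1:ℝ))).contDiff.comp (hG.fderiv_right (by simp))

lemma d_comm {G : ℝ × ℝ → ℝ} (hG : ContDiff ℝ (⊤ : ℕ∞) G) (p : ℝ × ℝ) :
    d1 (d2 G) p = d2 (d1 G) p := by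
  have hGd : Differentiable ℝ G := hG.differentiable (by simp)
  have hfd : Differentiable ℝ (fderiv ℝ G) := (hG.fderiv_right (by simp)).differentiable (by simp : ((⊤ : ℕ∞) : WithTop ℕ∞) ≠ 0)
  have hf'' : HasFDerivAt (fderiv ℝ G) (fderiv ℝ (fderiv ℝ G) p) p := (hfd p).hasFDerivAt
  have h2 : HasFDerivAt (d2 G)
      ((ContinuousLinearMap.apply ℝ ℝ ((0:ℝ), (1:ℝ))).comp (fderiv ℝ (fderiv ℝ G) p)) p :=
    (ContinuousLinearMap.apply ℝ ℝ ((0:ℝ), (1:ℝ))).hasFDerivAt.comp p hf''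
  have h1 : HasFDerivAt (d1 G)
      ((ContinuousLinearMap.apply ℝ ℝ ((1:ℝ), (0:ℝ))).comp (fderiv ℝ (fderiv ℝ G) p)) p :=
    (ContinuousLinearMap.apply ℝ ℝ ((1:ℝ), (0:ℝ))).hasFDerivAt.comp p hf''
  have e1 : d1 (d2 G) p = fderiv ℝ (fderiv ℝ G) p (1, 0) (0, 1) := by
    simp only [d1, h2.fderiv]; rfl
  have e2 : d2 (d1 G) p = fderiv ℝ (fderiv ℝ G) p (0, 1) (1, 0) := by
    simp only [d2, h1.fderiv]; rfl
  rw [e1, e2]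
  exact second_derivative_symmetric (fun y => (hGd y).hasFDerivAt) hf'' _ _

lemma bounded_of_tendsto_zero {g : ℝ → ℝ} (hc : Continuous g)
    (ht : Tendsto g atTop (𝓝 0)) (hb : Tendsto g atBot (𝓝 0)) :
    ∃ M, 0 < M ∧ ∀ x, |g x| ≤ M := by
  have ht' : ∀ᶠ x in atTop, |g x| < 1 := by
    have : Tendsto (fun x => |g x|) atTop (𝓝 |0|) := ht.abs
    rw [abs_zero] at this
    exact this.eventually_lt_const one_pos
  have hb' : ∀ᶠ x in atBot, |g x| < 1 := by
    have : Tendsto (fun x => |g x|) atBot (𝓝 |0|) := hb.abs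
    rw [abs_zero] at this
    exact this.eventually_lt_const one_pos
  obtain ⟨a, ha⟩ := eventually_atTop.1 ht'
  obtain ⟨b, hbb⟩ := eventually_atBot.1 hb'
  obtain ⟨Cc, hCc⟩ := (isCompact_Icc (a := b) (b := a)).exists_bound_of_continuousOn
    hc.continuousOn
  refine ⟨max Cc 1, lt_of_lt_of_le one_pos (le_max_right _ _), fun x => ?_⟩
  by_cases hxa : a ≤ x
  · exact le_trans (ha x hxa).le (le_max_right _ _)
  by_cases hxb : x ≤ b
  · exact le_trans (hbb x hxb).le (le_max_right _ _)
  · have : x ∈ Icc b a := ⟨le_of_not_ge hxb, le_of_not_ge hxa⟩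
    exact le_trans (hCc x this) (le_max_left _ _)

lemma integrableOn_neg_iff {g : ℝ → ℝ} {s : Set ℝ} (hs : MeasurableSet s) :
    IntegrableOn (fun x => g (-x)) (Neg.neg ⁻¹' s) ↔ IntegrableOn g s := by
  have hmp : MeasurePreserving (Neg.neg : ℝ → ℝ)
      (volume.restrict (Neg.neg ⁻¹' s)) (volume.restrict s) :=
    (Measure.measurePreserving_neg _).restrict_preimage hs
  exact hmp.integrable_comp_emb (MeasurableEquiv.neg ℝ).measurableEmbedding

lemma integrable_exp_neg_abs {c : ℝ} (hc : 0 < c) :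
    Integrable (fun x : ℝ => Real.exp (-c * |x|)) := by
  have hIoi : IntegrableOn (fun x : ℝ => Real.exp (-c * |x|)) (Ioi 0) := by
    refine (exp_neg_integrableOn_Ioi 0 hc).congr_fun (fun x hx => ?_) measurableSet_Ioi
    rw [abs_of_pos hx]
  have hIic : IntegrableOn (fun x : ℝ => Real.exp (-c * |x|)) (Iic 0) := by
    have hpre : (Neg.neg : ℝ → ℝ) ⁻¹' (Iic (0:ℝ)) = Ici 0 := by ext x; simp
    have key := integrableOn_neg_iff (g := fun x : ℝ => Real.exp (-c * |x|))
      (measurableSet_Iic (a := (0:ℝ)))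
    rw [hpre] at key
    refine key.mp ?_
    have he : (fun x : ℝ => Real.exp (-c * |(-x)|)) = fun x : ℝ => Real.exp (-c * |x|) := by
      funext x; rw [abs_neg]
    rw [he, integrableOn_Ici_iff_integrableOn_Ioi]
    exact hIoi
  have := hIic.union hIoi
  rwa [Set.Iic_union_Ioi, integrableOn_univ] at this

lemma tri_abs (x y : ℝ) : |x - y| ≤ |x| + |y| := by
  rw [sub_eq_add_neg]
  exact (abs_add_le _ _).trans (by rw [abs_neg])

lemma phi_bound {co a b t e Mθ C : ℝ} (hco : |co| ≤ 1) (ha : |a| ≤ |t| + C * e)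
    (hb : |b| ≤ C * e) (ht : |t| ≤ Mθ) (he0 : 0 ≤ e) (he1 : e ≤ 1) (hC : 0 ≤ C) :
    |co * (a * a) - b * a| ≤ t ^ 2 + (3 * Mθ * C + 2 * C * C) * e := by
  have h1 : |co * (a * a) - b * a| ≤ |co| * (|a| * |a|) + |b| * |a| := by
    calc |co * (a * a) - b * a| ≤ |co * (a * a)| + |b * a| := tri_abs _ _
      _ = |co| * (|a| * |a|) + |b| * |a| := by rw [abs_mul, abs_mul, abs_mul]
  have h2 : |co| * (|a| * |a|) + |b| * |a| ≤ 1 * ((|t| + C * e) * (|t| + C * e))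
      + (C * e) * (|t| + C * e) := by
    have h0a : (0:ℝ) ≤ |a| := abs_nonneg a
    have h0t : (0:ℝ) ≤ |t| + C * e := le_trans h0a ha
    gcongr <;> first | exact abs_nonneg _ | assumption
  have h3 : |t| * |t| = t ^ 2 := by rw [abs_mul_abs_self]; ring
  nlinarith [mul_nonneg (mul_nonneg hC he0) (sub_nonneg.2 ht),
    mul_nonneg (mul_nonneg (mul_nonneg hC hC) he0) (sub_nonneg.2 he1)]

lemma phi'_bound {co a b A B M C e : ℝ} (hco : |co| ≤ 1) (ha : |a| ≤ M) (hb : |b| ≤ C * e)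
    (hA : |A| ≤ C * e) (hB : |B| ≤ C * e) (he0 : 0 ≤ e) (he1 : e ≤ 1) (hC : 0 ≤ C)
    (hM : 0 ≤ M) :
    |co * (A * a + a * A) - (B * a + b * A)| ≤ (3 * M * C + C * C) * e := by
  have h1 : |co * (A * a + a * A) - (B * a + b * A)|
      ≤ |co| * (|A| * |a| + |a| * |A|) + (|B| * |a| + |b| * |A|) := by
    calc |co * (A * a + a * A) - (B * a + b * A)|
        ≤ |co * (A * a + a * A)| + |B * a + b * A| := tri_abs _ _
      _ ≤ |co| * (|A * a| + |a * A|) + (|B * a| + |b * A|) := by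
          rw [abs_mul]
          exact add_le_add (mul_le_mul_of_nonneg_left (abs_add_le _ _) (abs_nonneg co))
            (abs_add_le _ _)
      _ = |co| * (|A| * |a| + |a| * |A|) + (|B| * |a| + |b| * |A|) := by
          rw [abs_mul, abs_mul, abs_mul, abs_mul]
  have h2 : |co| * (|A| * |a| + |a| * |A|) + (|B| * |a| + |b| * |A|)
      ≤ 1 * ((C * e) * M + M * (C * e)) + ((C * e) * M + (C * e) * (C * e)) := by
    gcongr <;> first | exact abs_nonneg _ | assumption
  nlinarith [mul_nonneg (mul_nonneg (mul_nonneg hC hC) he0) (sub_nonneg.2 he1)]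

lemma phi_tail_bound {co a b t u eRH M Mθ C : ℝ} (hco : |co| ≤ 1) (ha : a = t + u)
    (hu : |u| ≤ C * eRH) (hb : |b| ≤ C * eRH) (haM : |a| ≤ M) (htM : |t| ≤ Mθ)
    (he0 : 0 ≤ eRH) (hC : 0 ≤ C) :
    |(co * (a * a) - b * a) - co * (t * t)| ≤ (C * (M + Mθ) + C * M) * eRH := by
  have key : (co * (a * a) - b * a) - co * (t * t) = co * (u * (a + t)) - b * a := by
    rw [ha]; ring
  rw [key]
  have h1 : |co * (u * (a + t)) - b * a| ≤ |co| * (|u| * (|a| + |t|)) + |b| * |a| := by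
    calc |co * (u * (a + t)) - b * a| ≤ |co * (u * (a + t))| + |b * a| := tri_abs _ _
      _ = |co| * (|u| * |a + t|) + |b| * |a| := by rw [abs_mul, abs_mul, abs_mul]
      _ ≤ |co| * (|u| * (|a| + |t|)) + |b| * |a| := by
          exact add_le_add (mul_le_mul_of_nonneg_left
            (mul_le_mul_of_nonneg_left (abs_add_le _ _) (abs_nonneg u)) (abs_nonneg co)) le_rfl
  have h2 : |co| * (|u| * (|a| + |t|)) + |b| * |a|
      ≤ 1 * ((C * eRH) * (M + Mθ)) + (C * eRH) * M := by
    have h0 : (0:ℝ) ≤ |a| + |t| := add_nonneg (abs_nonneg a) (abs_nonneg t)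
    gcongr <;> first | exact abs_nonneg _ | assumption
  nlinarith [mul_nonneg hC he0]

/-- Partial derivative in the first variable `R` of `g : ℝ → ℝ → ℝ`. -/
noncomputable def pdR (g : ℝ → ℝ → ℝ) : ℝ → ℝ → ℝ :=
  fun R H => deriv (fun r => g r H) R

/-- Partial derivative in the second variable `H` of `g : ℝ → ℝ → ℝ`. -/
noncomputable def pdH (g : ℝ → ℝ → ℝ) : ℝ → ℝ → ℝ :=
  fun R H => deriv (fun h => g R h) H

/-- Mixed derivative `∂_R^k ∂_H^l g`. -/
noncomputable def pdMix (k l : ℕ) (g : ℝ → ℝ → ℝ) : ℝ → ℝ → ℝ :=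
  fun R H => iteratedDeriv k (fun r => iteratedDeriv l (fun h => g r h) H) R

/-- the compatibility (contact angle) condition
`cos α = (σ(−1) − σ(1)) / ∫_ℝ (θ₀')²` is necessary for the existence of a smooth
solution `v` of the nonlinear elliptic problem `−div(A_α ∇v) + f'(v) = 0` on the upper
half-plane with the nonlinear boundary condition and exponential decay to `θ₀`.
Here, for `A_α = [[1, −cos α],[−cos α, 1]]`, the equation reads
`−∂_R²v + 2 cos α ∂_R∂_H v − ∂_H²v + f'(v) = 0`, and the conormal boundary term is
`N_{∂ℝ²₊}·A_α∇v = cos α ∂_R v − ∂_H v` at `H = 0`. -/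
theorem contact_angle_compatibility
    (f : ℝ → ℝ) (hf : ContDiff ℝ (⊤ : ℕ∞) f)
    (hf'm : deriv f (-1) = 0) (hf'p : deriv f 1 = 0)
    (hf''m : 0 < deriv (deriv f) (-1)) (hf''p : 0 < deriv (deriv f) 1)
    (hfeq : f (-1) = f 1)
    (hfgt : ∀ r ∈ Set.Ioo (-1 : ℝ) 1, f 1 < f r)
    (θ₀ : ℝ → ℝ) (hθsm : ContDiff ℝ (⊤ : ℕ∞) θ₀)
    (hode : ∀ z : ℝ, -deriv (deriv θ₀) z + deriv f (θ₀ z) = 0)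
    (hzero : θ₀ 0 = 0)
    (htop : Tendsto θ₀ atTop (nhds 1)) (hbot : Tendsto θ₀ atBot (nhds (-1)))
    (hθ' : ∀ z : ℝ, deriv θ₀ z = Real.sqrt (2 * (f (θ₀ z) - f (-1))))
    (hθ'pos : ∀ z : ℝ, 0 < deriv θ₀ z)
    (α : ℝ) (hα : α ∈ Set.Ioo 0 π)
    (σ : ℝ → ℝ) (hσ : ContDiff ℝ (⊤ : ℕ∞) σ)
    (hσ' : ∀ r : ℝ, r ∉ Set.Ioo (-1 : ℝ) 1 → deriv σ r = 0)
    (v : ℝ → ℝ → ℝ) (hv : ContDiff ℝ (⊤ : ℕ∞) (fun p : ℝ × ℝ => v p.1 p.2))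
    (hpde : ∀ R : ℝ, ∀ H : ℝ, 0 < H →
      -pdR (pdR v) R H + 2 * Real.cos α * pdR (pdH v) R H - pdH (pdH v) R H
        + deriv f (v R H) = 0)
    (hbc : ∀ R : ℝ,
      Real.cos α * pdR v R 0 - pdH v R 0 + deriv σ (v R 0) = 0)
    (hdec : ∀ k l : ℕ, ∃ c > (0:ℝ), ∃ C > (0:ℝ), ∀ R : ℝ, ∀ H : ℝ, 0 ≤ H →
      |pdMix k l (fun R' H' => v R' H' - θ₀ R') R H| ≤ C * Real.exp (-c * (|R| + H))) :
    Real.cos α = (σ (-1) - σ 1) / ∫ R : ℝ, (deriv θ₀ R) ^ 2 := by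
  classical
  set V : ℝ × ℝ → ℝ := fun p => v p.1 p.2 with hVdef
  have hV : ContDiff ℝ (⊤ : ℕ∞) V := hv
  set W : ℝ × ℝ → ℝ := fun p => v p.1 p.2 - θ₀ p.1 with hWdef
  have hW : ContDiff ℝ (⊤ : ℕ∞) W := hv.sub (hθsm.comp contDiff_fst)
  have hVd : Differentiable ℝ V := hV.differentiable (by simp)
  have hWd : Differentiable ℝ W := hW.differentiable (by simp)
  have hθd : ∀ z : ℝ, HasDerivAt θ₀ (deriv θ₀ z) z :=
    fun z => (hθsm.differentiable (by simp) z).hasDerivAt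
  have hfdiff : Differentiable ℝ f := hf.differentiable (by simp)
  have hd1Vsm : ContDiff ℝ (⊤ : ℕ∞) (d1 V) := contDiff_d1 hV
  have hd2Vsm : ContDiff ℝ (⊤ : ℕ∞) (d2 V) := contDiff_d2 hV
  have hd1Vd : Differentiable ℝ (d1 V) := hd1Vsm.differentiable (by simp)
  have hd2Vd : Differentiable ℝ (d2 V) := hd2Vsm.differentiable (by simp)
  have hd1Wd : Differentiable ℝ (d1 W) := (contDiff_d1 hW).differentiable (by simp)
  have hd2Wd : Differentiable ℝ (d2 W) := (contDiff_d2 hW).differentiable (by simp)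
  -- dictionary between pdR/pdH/pdMix and d1/d2
  have hpdRv : ∀ R H : ℝ, pdR v R H = d1 V (R, H) :=
    fun R H => (hasDerivAt_slice1 hVd R H).deriv
  have hpdHv : ∀ R H : ℝ, pdH v R H = d2 V (R, H) :=
    fun R H => (hasDerivAt_slice2 hVd R H).deriv
  have hpdRR : ∀ R H : ℝ, pdR (pdR v) R H = d1 (d1 V) (R, H) := by
    intro R H
    have he : (fun r => pdR v r H) = fun r => d1 V (r, H) := funext fun r => hpdRv r H
    show deriv (fun r => pdR v r H) R = _
    rw [he]
    exact (hasDerivAt_slice1 hd1Vd R H).deriv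
  have hpdRH : ∀ R H : ℝ, pdR (pdH v) R H = d1 (d2 V) (R, H) := by
    intro R H
    have he : (fun r => pdH v r H) = fun r => d2 V (r, H) := funext fun r => hpdHv r H
    show deriv (fun r => pdH v r H) R = _
    rw [he]
    exact (hasDerivAt_slice1 hd2Vd R H).deriv
  have hpdHH : ∀ R H : ℝ, pdH (pdH v) R H = d2 (d2 V) (R, H) := by
    intro R H
    have he : (fun h => pdH v R h) = fun h => d2 V (R, h) := funext fun h => hpdHv R h
    show deriv (fun h => pdH v R h) H = _
    rw [he]
    exact (hasDerivAt_slice2 hd2Vd R H).deriv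
  -- pdMix dictionary for w = v - θ₀
  have m00 : ∀ R H : ℝ, pdMix 0 0 (fun R' H' => v R' H' - θ₀ R') R H = W (R, H) := by
    intro R H; simp [pdMix, hWdef]
  have m10 : ∀ R H : ℝ, pdMix 1 0 (fun R' H' => v R' H' - θ₀ R') R H = d1 W (R, H) := by
    intro R H
    have h1 : pdMix 1 0 (fun R' H' => v R' H' - θ₀ R') R H
        = deriv (fun r => v r H - θ₀ r) R := by
      simp [pdMix, iteratedDeriv_one]
    rw [h1]
    exact (hasDerivAt_slice1 hWd R H).deriv
  have m01 : ∀ R H : ℝ, pdMix 0 1 (fun R' H' => v R' H' - θ₀ R') R H = d2 W (R, H) := by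
    intro R H
    have h1 : pdMix 0 1 (fun R' H' => v R' H' - θ₀ R') R H
        = deriv (fun h => v R h - θ₀ R) H := by
      simp [pdMix, iteratedDeriv_one]
    rw [h1]
    exact (hasDerivAt_slice2 hWd R H).deriv
  have m11 : ∀ R H : ℝ, pdMix 1 1 (fun R' H' => v R' H' - θ₀ R') R H = d1 (d2 W) (R, H) := by
    intro R H
    have h1 : pdMix 1 1 (fun R' H' => v R' H' - θ₀ R') R H
        = deriv (fun r => deriv (fun h => v r h - θ₀ r) H) R := by
      simp [pdMix, iteratedDeriv_one]
    rw [h1]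
    have he : (fun r => deriv (fun h => v r h - θ₀ r) H) = fun r => d2 W (r, H) :=
      funext fun r => (hasDerivAt_slice2 hWd r H).deriv
    rw [he]
    exact (hasDerivAt_slice1 hd2Wd R H).deriv
  have m02 : ∀ R H : ℝ, pdMix 0 2 (fun R' H' => v R' H' - θ₀ R') R H = d2 (d2 W) (R, H) := by
    intro R H
    have h1 : pdMix 0 2 (fun R' H' => v R' H' - θ₀ R') R H
        = deriv (fun h => deriv (fun h' => v R h' - θ₀ R) h) H := by
      simp only [pdMix, iteratedDeriv_zero]
      rw [show (2:ℕ) = 1 + 1 from rfl, iteratedDeriv_succ, iteratedDeriv_one]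
    rw [h1]
    have he : (fun h => deriv (fun h' => v R h' - θ₀ R) h) = fun h => d2 W (R, h) :=
      funext fun h => (hasDerivAt_slice2 hWd R h).deriv
    rw [he]
    exact (hasDerivAt_slice2 hd2Wd R H).deriv
  -- decomposition V = W + θ₀ ∘ fst at the level of derivatives
  have hVW : ∀ R H : ℝ, (fun r => W (r, H) + θ₀ r) = fun r => V (r, H) := by
    intro R H; funext r; simp [hVdef, hWdef]
  have hd1VW : ∀ R H : ℝ, d1 V (R, H) = deriv θ₀ R + d1 W (R, H) := by
    intro R H
    have h1 : HasDerivAt (fun r => W (r, H) + θ₀ r) (d1 W (R, H) + deriv θ₀ R) R :=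
      (hasDerivAt_slice1 hWd R H).add (hθd R)
    rw [hVW R H] at h1
    have := h1.unique (hasDerivAt_slice1 hVd R H)
    linarith
  have hd2VW : ∀ R H : ℝ, d2 V (R, H) = d2 W (R, H) := by
    intro R H
    have h1 : HasDerivAt (fun h => W (R, h) + θ₀ R) (d2 W (R, H)) H :=
      (hasDerivAt_slice2 hWd R H).add_const _
    have h2 : (fun h => W (R, h) + θ₀ R) = fun h => V (R, h) := by
      funext h; simp [hVdef, hWdef]
    rw [h2] at h1
    exact (h1.unique (hasDerivAt_slice2 hVd R H)).symm
  have hd2d1VW : ∀ R H : ℝ, d2 (d1 V) (R, H) = d2 (d1 W) (R, H) := by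
    intro R H
    have h1 : HasDerivAt (fun h => d1 W (R, h) + deriv θ₀ R) (d2 (d1 W) (R, H)) H :=
      (hasDerivAt_slice2 hd1Wd R H).add_const _
    have h2 : (fun h => d1 W (R, h) + deriv θ₀ R) = fun h => d1 V (R, h) := by
      funext h; rw [hd1VW R h]; ring
    rw [h2] at h1
    exact (h1.unique (hasDerivAt_slice2 hd1Vd R H)).symm
  have hd2fun : d2 V = d2 W := by
    funext p
    exact hd2VW p.1 p.2
  have hd2d2VW : ∀ R H : ℝ, d2 (d2 V) (R, H) = d2 (d2 W) (R, H) := by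
    intro R H; rw [hd2fun]
  -- uniform exponential bounds
  obtain ⟨c0, hc0, C0, hC0, hB00⟩ := hdec 0 0
  obtain ⟨c1, hc1, C1, hC1, hB10⟩ := hdec 1 0
  obtain ⟨c2, hc2, C2, hC2, hB01⟩ := hdec 0 1
  obtain ⟨c3, hc3, C3, hC3, hB11⟩ := hdec 1 1
  obtain ⟨c4, hc4, C4, hC4, hB02⟩ := hdec 0 2
  set c : ℝ := min c0 (min c1 (min c2 (min c3 c4))) with hcdef
  have hc : 0 < c := lt_min hc0 (lt_min hc1 (lt_min hc2 (lt_min hc3 hc4)))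
  set C : ℝ := max C0 (max C1 (max C2 (max C3 C4))) with hCdef
  have hC : 0 < C := lt_of_lt_of_le hC0 (le_max_left _ _)
  have keyb : ∀ ci Ci : ℝ, c ≤ ci → Ci ≤ C → ∀ R H : ℝ, 0 ≤ H →
      Ci * Real.exp (-ci * (|R| + H)) ≤ C * Real.exp (-c * (|R| + H)) := by
    intro ci Ci hci hCi R H hH
    have hs : 0 ≤ |R| + H := add_nonneg (abs_nonneg R) hH
    have hexp : Real.exp (-ci * (|R| + H)) ≤ Real.exp (-c * (|R| + H)) :=
      Real.exp_le_exp.2 (by nlinarith)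
    exact mul_le_mul hCi hexp (Real.exp_pos _).le hC.le
  have hcc0 : c ≤ c0 := min_le_left _ _
  have hcc1 : c ≤ c1 := le_trans (min_le_right _ _) (min_le_left _ _)
  have hcc2 : c ≤ c2 := le_trans (min_le_right _ _) (le_trans (min_le_right _ _) (min_le_left _ _))
  have hcc3 : c ≤ c3 := le_trans (min_le_right _ _) (le_trans (min_le_right _ _)
    (le_trans (min_le_right _ _) (min_le_left _ _)))
  have hcc4 : c ≤ c4 := le_trans (min_le_right _ _) (le_trans (min_le_right _ _)
    (le_trans (min_le_right _ _) (min_le_right _ _)))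
  have hCC0 : C0 ≤ C := le_max_left _ _
  have hCC1 : C1 ≤ C := le_trans (le_max_left _ _) (le_max_right _ _)
  have hCC2 : C2 ≤ C := le_trans (le_trans (le_max_left _ _) (le_max_right _ _)) (le_max_right _ _)
  have hCC3 : C3 ≤ C := le_trans (le_trans (le_trans (le_max_left _ _) (le_max_right _ _))
    (le_max_right _ _)) (le_max_right _ _)
  have hCC4 : C4 ≤ C := le_trans (le_trans (le_trans (le_max_right _ _) (le_max_right _ _))
    (le_max_right _ _)) (le_max_right _ _)
  have bW : ∀ R H : ℝ, 0 ≤ H → |W (R, H)| ≤ C * Real.exp (-c * (|R| + H)) := by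
    intro R H hH
    calc |W (R, H)| = |pdMix 0 0 (fun R' H' => v R' H' - θ₀ R') R H| := by rw [m00 R H]
      _ ≤ C0 * Real.exp (-c0 * (|R| + H)) := hB00 R H hH
      _ ≤ C * Real.exp (-c * (|R| + H)) := keyb c0 C0 hcc0 hCC0 R H hH
  have bW1 : ∀ R H : ℝ, 0 ≤ H → |d1 W (R, H)| ≤ C * Real.exp (-c * (|R| + H)) := by
    intro R H hH
    calc |d1 W (R, H)| = |pdMix 1 0 (fun R' H' => v R' H' - θ₀ R') R H| := by rw [m10 R H]
      _ ≤ C1 * Real.exp (-c1 * (|R| + H)) := hB10 R H hH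
      _ ≤ C * Real.exp (-c * (|R| + H)) := keyb c1 C1 hcc1 hCC1 R H hH
  have bW2 : ∀ R H : ℝ, 0 ≤ H → |d2 W (R, H)| ≤ C * Real.exp (-c * (|R| + H)) := by
    intro R H hH
    calc |d2 W (R, H)| = |pdMix 0 1 (fun R' H' => v R' H' - θ₀ R') R H| := by rw [m01 R H]
      _ ≤ C2 * Real.exp (-c2 * (|R| + H)) := hB01 R H hH
      _ ≤ C * Real.exp (-c * (|R| + H)) := keyb c2 C2 hcc2 hCC2 R H hH
  have bW12 : ∀ R H : ℝ, 0 ≤ H → |d1 (d2 W) (R, H)| ≤ C * Real.exp (-c * (|R| + H)) := by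
    intro R H hH
    calc |d1 (d2 W) (R, H)| = |pdMix 1 1 (fun R' H' => v R' H' - θ₀ R') R H| := by rw [m11 R H]
      _ ≤ C3 * Real.exp (-c3 * (|R| + H)) := hB11 R H hH
      _ ≤ C * Real.exp (-c * (|R| + H)) := keyb c3 C3 hcc3 hCC3 R H hH
  have bW22 : ∀ R H : ℝ, 0 ≤ H → |d2 (d2 W) (R, H)| ≤ C * Real.exp (-c * (|R| + H)) := by
    intro R H hH
    calc |d2 (d2 W) (R, H)| = |pdMix 0 2 (fun R' H' => v R' H' - θ₀ R') R H| := by rw [m02 R H]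
      _ ≤ C4 * Real.exp (-c4 * (|R| + H)) := hB02 R H hH
      _ ≤ C * Real.exp (-c * (|R| + H)) := keyb c4 C4 hcc4 hCC4 R H hH
  -- the R-only exponential bound
  have hEle : ∀ R H : ℝ, 0 ≤ H →
      C * Real.exp (-c * (|R| + H)) ≤ C * Real.exp (-c * |R|) := by
    intro R H hH
    exact mul_le_mul_of_nonneg_left (Real.exp_le_exp.2 (by nlinarith)) hC.le
  have hexpsplit : ∀ R H : ℝ,
      Real.exp (-c * (|R| + H)) = Real.exp (-c * |R|) * Real.exp (-c * H) := by
    intro R H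
    rw [← Real.exp_add]; ring_nf
  -- facts about θ₀'
  have hθ'cont : Continuous (deriv θ₀) := hθsm.continuous_deriv (by simp)
  have hGfun : ∀ z : ℝ, deriv θ₀ z = Real.sqrt (2 * (f (θ₀ z) - f (-1))) := hθ'
  have hsqcont : Continuous (fun y : ℝ => Real.sqrt (2 * (f y - f (-1)))) :=
    Real.continuous_sqrt.comp (continuous_const.mul (hf.continuous.sub continuous_const))
  have hθ'top : Tendsto (deriv θ₀) atTop (𝓝 0) := by
    have h1 : Tendsto (fun z => Real.sqrt (2 * (f (θ₀ z) - f (-1)))) atTop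
        (𝓝 (Real.sqrt (2 * (f 1 - f (-1))))) := (hsqcont.tendsto 1).comp htop
    have h2 : Real.sqrt (2 * (f 1 - f (-1))) = 0 := by rw [hfeq]; simp
    rw [h2] at h1
    exact h1.congr (fun z => (hGfun z).symm)
  have hθ'bot : Tendsto (deriv θ₀) atBot (𝓝 0) := by
    have h1 : Tendsto (fun z => Real.sqrt (2 * (f (θ₀ z) - f (-1)))) atBot
        (𝓝 (Real.sqrt (2 * (f (-1) - f (-1))))) := (hsqcont.tendsto (-1)).comp hbot
    have h2 : Real.sqrt (2 * (f (-1) - f (-1))) = 0 := by simp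
    rw [h2] at h1
    exact h1.congr (fun z => (hGfun z).symm)
  obtain ⟨Mθ, hMθpos, hMθ⟩ := bounded_of_tendsto_zero hθ'cont hθ'top hθ'bot
  -- integrability of θ₀'
  have hθ'int : Integrable (deriv θ₀) := by
    have hIoi : IntegrableOn (deriv θ₀) (Ioi 0) :=
      integrableOn_Ioi_deriv_of_nonneg' (fun x _ => hθd x) (fun x _ => (hθ'pos x).le) htop
    have hrefl : IntegrableOn (fun x => deriv θ₀ (-x)) (Ioi 0) := by
      have hd : ∀ x ∈ Ici (0:ℝ), HasDerivAt (fun y => -θ₀ (-y)) (deriv θ₀ (-x)) x := by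
        intro x _
        have h1 : HasDerivAt (fun y : ℝ => θ₀ (-y)) (deriv θ₀ (-x) * (-1)) x :=
          (hθd (-x)).comp x (hasDerivAt_neg x)
        have := h1.neg
        simp only [mul_neg_one, neg_neg] at this; exact this
      have hlim : Tendsto (fun y : ℝ => -θ₀ (-y)) atTop (𝓝 1) := by
        have := (hbot.comp tendsto_neg_atTop_atBot).neg
        simpa using this
      exact integrableOn_Ioi_deriv_of_nonneg' hd (fun x _ => (hθ'pos (-x)).le) hlim
    have hIio : IntegrableOn (deriv θ₀) (Iio 0) := by
      have hpre : (Neg.neg : ℝ → ℝ) ⁻¹' (Iio (0:ℝ)) = Ioi 0 := by ext x; simp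
      have key := integrableOn_neg_iff (g := deriv θ₀) (measurableSet_Iio (a := (0:ℝ)))
      rw [hpre] at key
      exact key.mp hrefl
    have hIic : IntegrableOn (deriv θ₀) (Iic 0) := by
      rwa [integrableOn_Iic_iff_integrableOn_Iio]
    have := hIic.union hIoi
    rwa [Set.Iic_union_Ioi, integrableOn_univ] at this
  have hθ'sqint : Integrable (fun R => (deriv θ₀ R) ^ 2) := by
    refine (hθ'int.const_mul Mθ).mono' ((hθ'cont.pow 2).aestronglyMeasurable) ?_
    refine Filter.Eventually.of_forall (fun R => ?_)
    have h1 := hθ'pos R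
    have h2 := hMθ R
    rw [Real.norm_eq_abs, abs_of_nonneg (by positivity)]
    rw [abs_of_pos h1] at h2
    nlinarith
  have hIpos : 0 < ∫ R : ℝ, (deriv θ₀ R) ^ 2 := by
    rw [integral_pos_iff_support_of_nonneg_ae
      (Filter.Eventually.of_forall (fun R => sq_nonneg _)) hθ'sqint]
    have hsup : Function.support (fun R => (deriv θ₀ R) ^ 2) = Set.univ := by
      ext R; simp [Function.mem_support, (hθ'pos R).ne']
    rw [hsup]
    simp
  -- decay of C * exp (-c * |R|) at ±∞
  have hdecayTop : Tendsto (fun R : ℝ => C * Real.exp (-c * |R|)) atTop (𝓝 0) := by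
    have h1 : Tendsto (fun R : ℝ => c * |R|) atTop atTop :=
      (tendsto_abs_atTop_atTop).const_mul_atTop hc
    have h2 : Tendsto (fun R : ℝ => -c * |R|) atTop atBot := by
      exact (tendsto_neg_atTop_atBot.comp h1).congr (fun R => (neg_mul c |R|).symm)
    have := (Real.tendsto_exp_atBot.comp h2).const_mul C
    simpa using this
  have hdecayBot : Tendsto (fun R : ℝ => C * Real.exp (-c * |R|)) atBot (𝓝 0) := by
    have h1 : Tendsto (fun R : ℝ => c * |R|) atBot atTop :=
      (tendsto_abs_atBot_atTop).const_mul_atTop hc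
    have h2 : Tendsto (fun R : ℝ => -c * |R|) atBot atBot := by
      exact (tendsto_neg_atTop_atBot.comp h1).congr (fun R => (neg_mul c |R|).symm)
    have := (Real.tendsto_exp_atBot.comp h2).const_mul C
    simpa using this
  -- global bound on d1 V for H ≥ 0
  set M : ℝ := Mθ + C with hMdef
  have hM : 0 < M := add_pos hMθpos hC
  have bV1 : ∀ R H : ℝ, 0 ≤ H → |d1 V (R, H)| ≤ M := by
    intro R H hH
    rw [hd1VW R H]
    have h1 := hMθ R
    have h2 := bW1 R H hH
    have h3 : Real.exp (-c * (|R| + H)) ≤ 1 := by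
      rw [Real.exp_le_one_iff, neg_mul]
      exact neg_nonpos.mpr (mul_nonneg hc.le (add_nonneg (abs_nonneg R) hH))
    have h4 : C * Real.exp (-c * (|R| + H)) ≤ C := by
      calc C * Real.exp (-c * (|R| + H)) ≤ C * 1 := mul_le_mul_of_nonneg_left h3 hC.le
        _ = C := mul_one C
    calc |deriv θ₀ R + d1 W (R, H)| ≤ |deriv θ₀ R| + |d1 W (R, H)| := abs_add_le _ _
      _ ≤ Mθ + C := add_le_add h1 (le_trans h2 h4)
  have bV2 : ∀ R H : ℝ, 0 ≤ H → |d2 V (R, H)| ≤ C * Real.exp (-c * (|R| + H)) := by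
    intro R H hH
    rw [hd2VW R H]
    exact bW2 R H hH
  have hcos1 : |Real.cos α| ≤ 1 := Real.abs_cos_le_one α
  have hexple1 : ∀ R : ℝ, Real.exp (-c * |R|) ≤ 1 := by
    intro R
    rw [Real.exp_le_one_iff, neg_mul]
    exact neg_nonpos.mpr (mul_nonneg hc.le (abs_nonneg R))
  -- the flux integrand and its H-derivative
  set φ : ℝ → ℝ → ℝ := fun H R =>
    Real.cos α * (d1 V (R, H) * d1 V (R, H)) - d2 V (R, H) * d1 V (R, H) with hφdef
  set φ' : ℝ → ℝ → ℝ := fun H R =>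
    Real.cos α * (d2 (d1 V) (R, H) * d1 V (R, H) + d1 V (R, H) * d2 (d1 V) (R, H))
      - (d2 (d2 V) (R, H) * d1 V (R, H) + d2 V (R, H) * d2 (d1 V) (R, H)) with hφ'def
  have hφderiv : ∀ R H : ℝ, HasDerivAt (fun h => φ h R) (φ' H R) H := by
    intro R H
    have a1 : HasDerivAt (fun h => d1 V (R, h)) (d2 (d1 V) (R, H)) H :=
      hasDerivAt_slice2 hd1Vd R H
    have b1 : HasDerivAt (fun h => d2 V (R, h)) (d2 (d2 V) (R, H)) H :=
      hasDerivAt_slice2 hd2Vd R H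
    exact ((a1.mul a1).const_mul (Real.cos α)).sub (b1.mul a1)
  -- bound on d2 (d1 V)
  have bV12 : ∀ R H : ℝ, 0 ≤ H → |d2 (d1 V) (R, H)| ≤ C * Real.exp (-c * (|R| + H)) := by
    intro R H hH
    rw [hd2d1VW R H, ← d_comm hW (R, H)]
    exact bW12 R H hH
  have bV22 : ∀ R H : ℝ, 0 ≤ H → |d2 (d2 V) (R, H)| ≤ C * Real.exp (-c * (|R| + H)) := by
    intro R H hH
    rw [hd2d2VW R H]
    exact bW22 R H hH
  -- continuity in R and in H
  have hcontR1 : ∀ H : ℝ, Continuous (fun R => d1 V (R, H)) := fun H =>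
    hd1Vsm.continuous.comp (continuous_id.prodMk continuous_const)
  have hcontR2 : ∀ H : ℝ, Continuous (fun R => d2 V (R, H)) := fun H =>
    hd2Vsm.continuous.comp (continuous_id.prodMk continuous_const)
  have hcontR12 : ∀ H : ℝ, Continuous (fun R => d2 (d1 V) (R, H)) := fun H =>
    (contDiff_d2 hd1Vsm).continuous.comp (continuous_id.prodMk continuous_const)
  have hcontR22 : ∀ H : ℝ, Continuous (fun R => d2 (d2 V) (R, H)) := fun H =>
    (contDiff_d2 hd2Vsm).continuous.comp (continuous_id.prodMk continuous_const)
  have hφcont : ∀ H : ℝ, Continuous (fun R => φ H R) := by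
    intro H
    exact (continuous_const.mul ((hcontR1 H).mul (hcontR1 H))).sub
      ((hcontR2 H).mul (hcontR1 H))
  have hφ'cont : ∀ H : ℝ, Continuous (fun R => φ' H R) := by
    intro H
    exact (continuous_const.mul (((hcontR12 H).mul (hcontR1 H)).add
      ((hcontR1 H).mul (hcontR12 H)))).sub
      (((hcontR22 H).mul (hcontR1 H)).add ((hcontR2 H).mul (hcontR12 H)))
  have hφcontH : ∀ R : ℝ, Continuous (fun H => φ H R) := by
    intro R
    have c1 : Continuous (fun H => d1 V (R, H)) :=
      hd1Vsm.continuous.comp (continuous_const.prodMk continuous_id)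
    have c2 : Continuous (fun H => d2 V (R, H)) :=
      hd2Vsm.continuous.comp (continuous_const.prodMk continuous_id)
    exact (continuous_const.mul (c1.mul c1)).sub (c2.mul c1)
  -- pointwise bounds
  set Kψ : ℝ := 3 * Mθ * C + 2 * C * C with hKψdef
  set ψ : ℝ → ℝ := fun R => (deriv θ₀ R) ^ 2 + Kψ * Real.exp (-c * |R|) with hψdef
  have hφle : ∀ H R : ℝ, 0 ≤ H → |φ H R| ≤ ψ R := by
    intro H R hH
    have hu : |d1 W (R, H)| ≤ C * Real.exp (-c * |R|) :=
      le_trans (bW1 R H hH) (hEle R H hH)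
    have hb : |d2 V (R, H)| ≤ C * Real.exp (-c * |R|) :=
      le_trans (bV2 R H hH) (hEle R H hH)
    have ha : |d1 V (R, H)| ≤ |deriv θ₀ R| + C * Real.exp (-c * |R|) := by
      rw [hd1VW R H]
      exact (abs_add_le _ _).trans (add_le_add le_rfl hu)
    exact phi_bound hcos1 ha hb (hMθ R) (Real.exp_pos _).le (hexple1 R) hC.le
  have hφ'le : ∀ H R : ℝ, 0 ≤ H → |φ' H R| ≤ (3 * M * C + C * C) * Real.exp (-c * |R|) := by
    intro H R hH
    have hA : |d2 (d1 V) (R, H)| ≤ C * Real.exp (-c * |R|) :=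
      le_trans (bV12 R H hH) (hEle R H hH)
    have hB : |d2 (d2 V) (R, H)| ≤ C * Real.exp (-c * |R|) :=
      le_trans (bV22 R H hH) (hEle R H hH)
    have hb : |d2 V (R, H)| ≤ C * Real.exp (-c * |R|) :=
      le_trans (bV2 R H hH) (hEle R H hH)
    exact phi'_bound hcos1 (bV1 R H hH) hb hA hB (Real.exp_pos _).le (hexple1 R) hC.le hM.le
  -- integrability
  have hψint : Integrable ψ :=
    hθ'sqint.add ((integrable_exp_neg_abs hc).const_mul Kψ)
  have hφint : ∀ H : ℝ, 0 ≤ H → Integrable (φ H) := by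
    intro H hH
    refine hψint.mono' ((hφcont H).aestronglyMeasurable) ?_
    exact Filter.Eventually.of_forall fun R => by
      rw [Real.norm_eq_abs]; exact hφle H R hH
  have hφ'int : ∀ H : ℝ, 0 ≤ H → Integrable (φ' H) := by
    intro H hH
    refine (((integrable_exp_neg_abs hc).const_mul (3 * M * C + C * C)).mono'
      ((hφ'cont H).aestronglyMeasurable)) ?_
    exact Filter.Eventually.of_forall fun R => by
      rw [Real.norm_eq_abs]; exact hφ'le H R hH
  -- limits in R at fixed height H ≥ 0
  have hWtop : ∀ H : ℝ, 0 ≤ H → Tendsto (fun R => W (R, H)) atTop (𝓝 0) := by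
    intro H hH
    refine squeeze_zero_norm (fun R => ?_) hdecayTop
    rw [Real.norm_eq_abs]; exact (bW R H hH).trans (hEle R H hH)
  have hWbot : ∀ H : ℝ, 0 ≤ H → Tendsto (fun R => W (R, H)) atBot (𝓝 0) := by
    intro H hH
    refine squeeze_zero_norm (fun R => ?_) hdecayBot
    rw [Real.norm_eq_abs]; exact (bW R H hH).trans (hEle R H hH)
  have hW1top : ∀ H : ℝ, 0 ≤ H → Tendsto (fun R => d1 W (R, H)) atTop (𝓝 0) := by
    intro H hH
    refine squeeze_zero_norm (fun R => ?_) hdecayTop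
    rw [Real.norm_eq_abs]; exact (bW1 R H hH).trans (hEle R H hH)
  have hW1bot : ∀ H : ℝ, 0 ≤ H → Tendsto (fun R => d1 W (R, H)) atBot (𝓝 0) := by
    intro H hH
    refine squeeze_zero_norm (fun R => ?_) hdecayBot
    rw [Real.norm_eq_abs]; exact (bW1 R H hH).trans (hEle R H hH)
  have hV2top : ∀ H : ℝ, 0 ≤ H → Tendsto (fun R => d2 V (R, H)) atTop (𝓝 0) := by
    intro H hH
    refine squeeze_zero_norm (fun R => ?_) hdecayTop
    rw [Real.norm_eq_abs]; exact (bV2 R H hH).trans (hEle R H hH)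
  have hV2bot : ∀ H : ℝ, 0 ≤ H → Tendsto (fun R => d2 V (R, H)) atBot (𝓝 0) := by
    intro H hH
    refine squeeze_zero_norm (fun R => ?_) hdecayBot
    rw [Real.norm_eq_abs]; exact (bV2 R H hH).trans (hEle R H hH)
  have hVtop : ∀ H : ℝ, 0 ≤ H → Tendsto (fun R => V (R, H)) atTop (𝓝 1) := by
    intro H hH
    have h1 := (hWtop H hH).add htop
    rw [zero_add, hVW 0 H] at h1
    exact h1
  have hVbot : ∀ H : ℝ, 0 ≤ H → Tendsto (fun R => V (R, H)) atBot (𝓝 (-1)) := by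
    intro H hH
    have h1 := (hWbot H hH).add hbot
    rw [zero_add, hVW 0 H] at h1
    exact h1
  have hV1top : ∀ H : ℝ, 0 ≤ H → Tendsto (fun R => d1 V (R, H)) atTop (𝓝 0) := by
    intro H hH
    have h1 := hθ'top.add (hW1top H hH)
    rw [add_zero] at h1
    have h2 : (fun R => deriv θ₀ R + d1 W (R, H)) = fun R => d1 V (R, H) :=
      funext fun R => (hd1VW R H).symm
    rwa [h2] at h1
  have hV1bot : ∀ H : ℝ, 0 ≤ H → Tendsto (fun R => d1 V (R, H)) atBot (𝓝 0) := by
    intro H hH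
    have h1 := hθ'bot.add (hW1bot H hH)
    rw [add_zero] at h1
    have h2 : (fun R => deriv θ₀ R + d1 W (R, H)) = fun R => d1 V (R, H) :=
      funext fun R => (hd1VW R H).symm
    rwa [h2] at h1
  -- the H-derivative of the flux integrand integrates to zero in R
  have hint0 : ∀ H : ℝ, 0 < H → (∫ R : ℝ, φ' H R) = 0 := by
    intro H hH
    set gg : ℝ → ℝ := fun R =>
      (1/2) * (d1 V (R, H) * d1 V (R, H)) - (1/2) * (d2 V (R, H) * d2 V (R, H)) - f (V (R, H))
      with hggdef
    have hggd : ∀ R : ℝ, HasDerivAt gg (φ' H R) R := by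
      intro R
      have a1 : HasDerivAt (fun r => d1 V (r, H)) (d1 (d1 V) (R, H)) R :=
        hasDerivAt_slice1 hd1Vd R H
      have b1 : HasDerivAt (fun r => d2 V (r, H)) (d1 (d2 V) (R, H)) R :=
        hasDerivAt_slice1 hd2Vd R H
      have c1 : HasDerivAt (fun r => V (r, H)) (d1 V (R, H)) R :=
        hasDerivAt_slice1 hVd R H
      have fc : HasDerivAt (fun r => f (V (r, H))) (deriv f (V (R, H)) * d1 V (R, H)) R :=
        (hfdiff (V (R, H))).hasDerivAt.comp R c1
      have h := (((a1.mul a1).const_mul ((1:ℝ)/2)).sub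
        ((b1.mul b1).const_mul ((1:ℝ)/2))).sub fc
      have heq : φ' H R = 1/2 * (d1 (d1 V) (R, H) * d1 V (R, H) +
          d1 V (R, H) * d1 (d1 V) (R, H)) -
          1/2 * (d1 (d2 V) (R, H) * d2 V (R, H) + d2 V (R, H) * d1 (d2 V) (R, H)) -
          deriv f (V (R, H)) * d1 V (R, H) := by
        have hsch : d1 (d2 V) (R, H) = d2 (d1 V) (R, H) := d_comm hV (R, H)
        have hP := hpde R H hH
        rw [hpdRR R H, hpdRH R H, hpdHH R H] at hP
        have hVv : V (R, H) = v R H := rfl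
        rw [hφ'def]
        simp only []
        rw [← hsch, hVv]
        linear_combination (d1 V (R, H)) * hP
      rw [heq]
      exact h
    have hggtop : Tendsto gg atTop (𝓝 (-(f 1))) := by
      have h1 : Tendsto (fun R => f (V (R, H))) atTop (𝓝 (f 1)) :=
        (hf.continuous.tendsto 1).comp (hVtop H hH.le)
      have h2 := ((((hV1top H hH.le).mul (hV1top H hH.le)).const_mul ((1:ℝ)/2)).sub
        (((hV2top H hH.le).mul (hV2top H hH.le)).const_mul ((1:ℝ)/2))).sub h1
      have h3 : (1:ℝ)/2 * (0 * 0) - 1/2 * (0 * 0) - f 1 = -(f 1) := by ring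
      rwa [h3] at h2
    have hggbot : Tendsto gg atBot (𝓝 (-(f (-1)))) := by
      have h1 : Tendsto (fun R => f (V (R, H))) atBot (𝓝 (f (-1))) :=
        (hf.continuous.tendsto (-1)).comp (hVbot H hH.le)
      have h2 := ((((hV1bot H hH.le).mul (hV1bot H hH.le)).const_mul ((1:ℝ)/2)).sub
        (((hV2bot H hH.le).mul (hV2bot H hH.le)).const_mul ((1:ℝ)/2))).sub h1
      have h3 : (1:ℝ)/2 * (0 * 0) - 1/2 * (0 * 0) - f (-1) = -(f (-1)) := by ring
      rwa [h3] at h2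
    have := MeasureTheory.integral_of_hasDerivAt_of_tendsto hggd (hφ'int H hH.le)
      hggbot hggtop
    rw [this, hfeq]
    ring
  -- the flux function
  set Φ : ℝ → ℝ := fun H => ∫ R : ℝ, φ H R with hΦdef
  have hΦderiv : ∀ H₀ : ℝ, 0 < H₀ → HasDerivAt Φ 0 H₀ := by
    intro H₀ hH₀
    have hball : ∀ x ∈ Metric.ball H₀ (H₀ / 2), (0:ℝ) ≤ x := by
      intro x hx
      rw [Metric.mem_ball, Real.dist_eq] at hx
      have := abs_lt.1 hx
      linarith [this.1]
    have key := hasDerivAt_integral_of_dominated_loc_of_deriv_le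
      (F := φ) (F' := φ') (x₀ := H₀) (s := Metric.ball H₀ (H₀ / 2))
      (bound := fun R => (3 * M * C + C * C) * Real.exp (-c * |R|))
      (Metric.ball_mem_nhds H₀ (half_pos hH₀))
      (Filter.Eventually.of_forall fun H => (hφcont H).aestronglyMeasurable)
      (hφint H₀ hH₀.le)
      ((hφ'cont H₀).aestronglyMeasurable)
      (Filter.Eventually.of_forall fun R x hx => by
        rw [Real.norm_eq_abs]; exact hφ'le x R (hball x hx))
      ((integrable_exp_neg_abs hc).const_mul _)
      (Filter.Eventually.of_forall fun R x _ => hφderiv R x)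
    have h0 := key.2
    rw [hint0 H₀ hH₀] at h0
    exact h0
  have hΦc0 : Tendsto Φ (𝓝[>] (0:ℝ)) (𝓝 (Φ 0)) := by
    refine tendsto_integral_filter_of_dominated_convergence ψ ?_ ?_ hψint ?_
    · exact eventually_nhdsWithin_of_forall fun H _ => (hφcont H).aestronglyMeasurable
    · exact eventually_nhdsWithin_of_forall fun H (hH : H ∈ Ioi 0) =>
        Filter.Eventually.of_forall fun R => by
          rw [Real.norm_eq_abs]; exact hφle H R (le_of_lt hH)
    · exact Filter.Eventually.of_forall fun R =>
        ((hφcontH R).tendsto 0).mono_left nhdsWithin_le_nhds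
  have hΦconst : ∀ b : ℝ, 0 < b → Φ b = Φ 0 := by
    intro b hb
    have heq : ∀ ε, ε ∈ Ioc (0:ℝ) b → Φ b = Φ ε := by
      intro ε hε
      have hcont : ContinuousOn Φ (Icc ε b) := fun x hx =>
        ((hΦderiv x (lt_of_lt_of_le hε.1 hx.1)).continuousAt).continuousWithinAt
      have hder : ∀ x ∈ Ico ε b, HasDerivWithinAt Φ 0 (Ici x) x := fun x hx =>
        (hΦderiv x (lt_of_lt_of_le hε.1 hx.1)).hasDerivWithinAt
      exact constant_of_has_deriv_right_zero hcont hder b (right_mem_Icc.2 hε.2)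
    have h2 : Φ =ᶠ[𝓝[>] (0:ℝ)] fun _ => Φ b := by
      filter_upwards [Ioc_mem_nhdsGT_of_mem (Set.left_mem_Ico.2 hb)] with ε hε
      exact (heq ε hε).symm
    have h3 : Tendsto Φ (𝓝[>] (0:ℝ)) (𝓝 (Φ b)) := by
      rw [tendsto_congr' h2]; exact tendsto_const_nhds
    exact tendsto_nhds_unique h3 hΦc0
  -- limit at infinity
  set I : ℝ := ∫ R : ℝ, (deriv θ₀ R) ^ 2 with hIdef
  set K₂ : ℝ := C * (M + Mθ) + C * M with hK₂def
  set J : ℝ := ∫ R : ℝ, Real.exp (-c * |R|) with hJdef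
  have hΦtail : ∀ H : ℝ, 0 ≤ H →
      |Φ H - Real.cos α * I| ≤ (K₂ * Real.exp (-c * H)) * J := by
    intro H hH
    have hsub : Φ H - Real.cos α * I
        = ∫ R : ℝ, (φ H R - Real.cos α * (deriv θ₀ R) ^ 2) := by
      rw [hΦdef]
      simp only []
      rw [integral_sub (hφint H hH) (hθ'sqint.const_mul _), integral_const_mul]
    have hptw : ∀ R : ℝ, |φ H R - Real.cos α * (deriv θ₀ R) ^ 2|
        ≤ (K₂ * Real.exp (-c * H)) * Real.exp (-c * |R|) := by
      intro R
      have hu : |d1 W (R, H)| ≤ C * (Real.exp (-c * |R|) * Real.exp (-c * H)) := by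
        have h := bW1 R H hH; rwa [hexpsplit R H] at h
      have hb : |d2 V (R, H)| ≤ C * (Real.exp (-c * |R|) * Real.exp (-c * H)) := by
        have h := bV2 R H hH; rwa [hexpsplit R H] at h
      have h0 : φ H R - Real.cos α * (deriv θ₀ R) ^ 2
          = (Real.cos α * (d1 V (R, H) * d1 V (R, H)) - d2 V (R, H) * d1 V (R, H))
            - Real.cos α * (deriv θ₀ R * deriv θ₀ R) := by
        simp only [hφdef]; ring
      rw [h0]
      have hres := phi_tail_bound (M := M) (Mθ := Mθ) hcos1 (hd1VW R H) hu hb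
        (bV1 R H hH) (hMθ R) (by positivity) hC.le
      calc |(Real.cos α * (d1 V (R, H) * d1 V (R, H)) - d2 V (R, H) * d1 V (R, H))
          - Real.cos α * (deriv θ₀ R * deriv θ₀ R)|
          ≤ (C * (M + Mθ) + C * M) * (Real.exp (-c * |R|) * Real.exp (-c * H)) := hres
        _ = (K₂ * Real.exp (-c * H)) * Real.exp (-c * |R|) := by rw [hK₂def]; ring
    rw [hsub]
    have hAbs := norm_integral_le_of_norm_le
      ((integrable_exp_neg_abs hc).const_mul (K₂ * Real.exp (-c * H)))
      (Filter.Eventually.of_forall fun R => by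
        rw [Real.norm_eq_abs]; exact hptw R)
    rw [Real.norm_eq_abs] at hAbs
    calc |∫ R : ℝ, (φ H R - Real.cos α * (deriv θ₀ R) ^ 2)|
        ≤ ∫ R : ℝ, (K₂ * Real.exp (-c * H)) * Real.exp (-c * |R|) := hAbs
      _ = (K₂ * Real.exp (-c * H)) * J := by rw [integral_const_mul, hJdef]
  have hexpHtop : Tendsto (fun H : ℝ => (K₂ * Real.exp (-c * H)) * J) atTop (𝓝 0) := by
    have h1 : Tendsto (fun H : ℝ => c * H) atTop atTop := tendsto_id.const_mul_atTop hc
    have h2 : Tendsto (fun H : ℝ => -c * H) atTop atBot :=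
      (tendsto_neg_atTop_atBot.comp h1).congr (fun H => (neg_mul c H).symm)
    have h3 := ((Real.tendsto_exp_atBot.comp h2).const_mul K₂).mul_const J
    simpa using h3
  have hΦtop : Tendsto Φ atTop (𝓝 (Real.cos α * I)) := by
    rw [← tendsto_sub_nhds_zero_iff]
    refine squeeze_zero_norm' ?_ hexpHtop
    filter_upwards [eventually_ge_atTop (0:ℝ)] with H hH
    rw [Real.norm_eq_abs]
    exact hΦtail H hH
  have hΦtop' : Tendsto Φ atTop (𝓝 (Φ 0)) := by
    have hev : Φ =ᶠ[atTop] fun _ => Φ 0 := by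
      filter_upwards [eventually_gt_atTop (0:ℝ)] with H hH
      exact hΦconst H hH
    rw [tendsto_congr' hev]
    exact tendsto_const_nhds
  have hLeq : Real.cos α * I = Φ 0 := tendsto_nhds_unique hΦtop hΦtop'
  -- evaluate Φ 0 via the boundary condition
  have hbc' : ∀ R : ℝ, d2 V (R, 0) = Real.cos α * d1 V (R, 0) + deriv σ (v R 0) := by
    intro R
    have h := hbc R
    rw [hpdRv R 0, hpdHv R 0] at h
    linarith
  have hΦ0 : Φ 0 = σ (-1) - σ 1 := by
    have hder : ∀ R : ℝ, HasDerivAt (fun r => -σ (v r 0)) (φ 0 R) R := by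
      intro R
      have c1 : HasDerivAt (fun r => V (r, 0)) (d1 V (R, 0)) R := hasDerivAt_slice1 hVd R 0
      have cσ : HasDerivAt σ (deriv σ (V (R, 0))) (V (R, 0)) :=
        (hσ.differentiable (by simp) (V (R, 0))).hasDerivAt
      have h := (cσ.comp R c1).neg
      have heq : φ 0 R = -(deriv σ (V (R, 0)) * d1 V (R, 0)) := by
        simp only [hφdef]
        have hVv : V (R, 0) = v R 0 := rfl
        rw [hbc' R, hVv]
        ring
      rw [heq]
      exact h
    have hlimT : Tendsto (fun R => -σ (v R 0)) atTop (𝓝 (-σ 1)) :=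
      ((hσ.continuous.tendsto 1).comp (hVtop 0 le_rfl)).neg
    have hlimB : Tendsto (fun R => -σ (v R 0)) atBot (𝓝 (-σ (-1))) :=
      ((hσ.continuous.tendsto (-1)).comp (hVbot 0 le_rfl)).neg
    have hval := MeasureTheory.integral_of_hasDerivAt_of_tendsto hder (hφint 0 le_rfl)
      hlimB hlimT
    calc Φ 0 = ∫ R : ℝ, φ 0 R := rfl
      _ = -σ 1 - -σ (-1) := hval
      _ = σ (-1) - σ 1 := by ring
  rw [eq_div_iff (ne_of_gt hIpos)]
  exact hLeq.trans hΦ0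
end

section
/- It holds that ∫_ℝ (θ₀'(R))² dR = ∫_{−1}^{1} √(2(f(r) − f(−1))) dr. -/
open Filter Topology MeasureTheory

/-- `∫_ℝ (θ₀')² dR = ∫_{−1}^{1} √(2(f(r) − f(−1))) dr` for the optimal
profile `θ₀` of the double-well potential `f`. -/
theorem optimal_profile_energy_identity
    (f : ℝ → ℝ) (hf : ContDiff ℝ (⊤ : ℕ∞) f)
    (hf'm : deriv f (-1) = 0) (hf'p : deriv f 1 = 0)
    (hf''m : 0 < deriv (deriv f) (-1)) (hf''p : 0 < deriv (deriv f) 1)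
    (hfeq : f (-1) = f 1)
    (hfgt : ∀ r ∈ Set.Ioo (-1 : ℝ) 1, f 1 < f r)
    (θ₀ : ℝ → ℝ) (hθsm : ContDiff ℝ (⊤ : ℕ∞) θ₀)
    (hode : ∀ z : ℝ, -deriv (deriv θ₀) z + deriv f (θ₀ z) = 0)
    (hzero : θ₀ 0 = 0)
    (htop : Tendsto θ₀ atTop (nhds 1)) (hbot : Tendsto θ₀ atBot (nhds (-1)))
    (hθ' : ∀ z : ℝ, deriv θ₀ z = Real.sqrt (2 * (f (θ₀ z) - f (-1))))
    (hθ'pos : ∀ z : ℝ, 0 < deriv θ₀ z) :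
    (∫ R : ℝ, (deriv θ₀ R) ^ 2)
      = ∫ r in (-1:ℝ)..1, Real.sqrt (2 * (f r - f (-1))) := by
  set g : ℝ → ℝ := fun r => Real.sqrt (2 * (f r - f (-1))) with hgdef
  have hg : Continuous g := by
    apply Real.continuous_sqrt.comp
    exact (continuous_const.mul (hf.continuous.sub continuous_const))
  -- primitive of g
  set G : ℝ → ℝ := fun x => ∫ t in (0:ℝ)..x, g t with hGdef
  have hGd : ∀ x : ℝ, HasDerivAt G (g x) x := fun x =>
    intervalIntegral.integral_hasDerivAt_right (hg.intervalIntegrable _ _)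
      (hg.stronglyMeasurableAtFilter _ _) hg.continuousAt
  have hGcont : Continuous G := by
    have : Differentiable ℝ G := fun x => (hGd x).differentiableAt
    exact this.continuous
  -- H = G ∘ θ₀ is a primitive of (θ₀')²
  set H : ℝ → ℝ := fun z => G (θ₀ z) with hHdef
  have hθd : ∀ z : ℝ, HasDerivAt θ₀ (deriv θ₀ z) z := fun z =>
    ((hθsm.differentiable (by simp)) z).hasDerivAt
  have hHd : ∀ z : ℝ, HasDerivAt H ((deriv θ₀ z) ^ 2) z := by
    intro z
    have := (hGd (θ₀ z)).comp z (hθd z)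
    have hge : g (θ₀ z) * deriv θ₀ z = (deriv θ₀ z) ^ 2 := by
      have h1 : g (θ₀ z) = deriv θ₀ z := (hθ' z).symm
      rw [h1, sq]
    rwa [hge] at this
  have htopH : Tendsto H atTop (𝓝 (G 1)) := (hGcont.tendsto 1).comp htop
  have hbotH : Tendsto H atBot (𝓝 (G (-1))) := (hGcont.tendsto (-1)).comp hbot
  -- continuity & nonnegativity of the integrand
  have hcont : Continuous fun z : ℝ => (deriv θ₀ z) ^ 2 :=
    (hθsm.continuous_deriv (by simp)).pow 2
  have hnonneg : ∀ z : ℝ, 0 ≤ (deriv θ₀ z) ^ 2 := fun z => sq_nonneg _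
  -- integrability
  have hIoi : IntegrableOn (fun z : ℝ => (deriv θ₀ z) ^ 2) (Set.Ioi 0) :=
    integrableOn_Ioi_deriv_of_nonneg' (fun x _ => hHd x)
      (fun x _ => hnonneg x) htopH
  have hIic : IntegrableOn (fun z : ℝ => (deriv θ₀ z) ^ 2) (Set.Iic 0) := by
    apply integrableOn_Iic_of_intervalIntegral_norm_tendsto (H 0 - G (-1)) 0
      (a := fun i : ℝ => i) (l := atBot)
      (fun i => (hcont.integrableOn_Ioc))
      tendsto_id
    have key : ∀ᶠ i in (atBot : Filter ℝ),
        (∫ x in i..(0:ℝ), ‖(deriv θ₀ x) ^ 2‖) = H 0 - H i := by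
      filter_upwards [eventually_le_atBot (0:ℝ)] with i hi
      have : (∫ x in i..(0:ℝ), ‖(deriv θ₀ x) ^ 2‖)
          = ∫ x in i..(0:ℝ), (deriv θ₀ x) ^ 2 := by
        apply intervalIntegral.integral_congr
        intro x _
        exact Real.norm_of_nonneg (hnonneg x)
      rw [this]
      exact intervalIntegral.integral_eq_sub_of_hasDerivAt
        (fun x _ => hHd x) (hcont.intervalIntegrable _ _)
    apply Tendsto.congr' (EventuallyEq.symm key)
    exact (tendsto_const_nhds.sub hbotH)
  have hint : Integrable fun z : ℝ => (deriv θ₀ z) ^ 2 := by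
    rw [← integrableOn_univ, ← Set.Iic_union_Ioi (a := (0:ℝ))]
    exact hIic.union hIoi
  -- main computation
  have hmain : (∫ R : ℝ, (deriv θ₀ R) ^ 2) = G 1 - G (-1) :=
    integral_of_hasDerivAt_of_tendsto hHd hint hbotH htopH
  rw [hmain]
  exact intervalIntegral.integral_interval_sub_left
    (hg.intervalIntegrable _ _) (hg.intervalIntegrable _ _)
end

section
/- There exists C > 0 such that for every ψ that is continuously differentiable on an open neighbourhood of closure(Ω): ∫_{∂Ω} ψ² dH¹ ≤ C (‖ψ‖²_{L²(Ω)} + ‖∇ψ‖_{L²(Ω)} ‖ψ‖_{L²(Ω)}). -/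
open Filter Topology MeasureTheory Set
open scoped RealInnerProductSpace

noncomputable section

/-- The plane `ℝ²` as a Euclidean space. -/
abbrev E2 := EuclideanSpace ℝ (Fin 2)


/-- indicator of a continuous-on-open function is measurable -/
lemma measurable_indicator_continuousOn {f : E2 → ℝ} {U : Set E2} (hU : IsOpen U)
    (hf : ContinuousOn f U) : Measurable (U.indicator f) := by
  apply measurable_of_isOpen
  intro s hs
  by_cases h0 : (0:ℝ) ∈ s
  · have : U.indicator f ⁻¹' s = (U ∩ f ⁻¹' s) ∪ Uᶜ := by
      ext x
      by_cases hx : x ∈ U <;> simp [Set.indicator_apply, hx, h0]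
    rw [this]
    exact ((hf.isOpen_inter_preimage hU hs).measurableSet).union hU.measurableSet.compl
  · have : U.indicator f ⁻¹' s = U ∩ f ⁻¹' s := by
      ext x
      by_cases hx : x ∈ U <;> simp [Set.indicator_apply, hx, h0]
    rw [this]
    exact (hf.isOpen_inter_preimage hU hs).measurableSet

/-- a lower mean value bound from a pointwise lower bound on the derivative -/
lemma mvt_lower {f f' : ℝ → ℝ} {a b m : ℝ} (hab : a ≤ b)
    (hf : ∀ t ∈ Set.Icc a b, HasDerivAt f (f' t) t)
    (hm : ∀ t ∈ Set.Icc a b, m ≤ f' t) :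
    m * (b - a) ≤ f b - f a := by
  set k : ℝ → ℝ := fun t => f t - m * t with hk
  have hk' : ∀ t ∈ Set.Icc a b, HasDerivAt k (f' t - m) t := by
    intro t ht
    exact (hf t ht).sub (((hasDerivAt_id t).const_mul m).congr_deriv (by ring))
  have hmono : MonotoneOn k (Set.Icc a b) := by
    apply monotoneOn_of_deriv_nonneg (convex_Icc a b)
    · exact fun t ht => (hk' t ht).continuousAt.continuousWithinAt
    · intro t ht
      rw [interior_Icc] at ht
      exact ((hk' t (Set.mem_Icc_of_Ioo ht)).differentiableAt).differentiableWithinAt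
    · intro t ht
      rw [interior_Icc] at ht
      rw [(hk' t (Set.mem_Icc_of_Ioo ht)).deriv]
      have := hm t (Set.mem_Icc_of_Ioo ht)
      linarith
  have := hmono (Set.left_mem_Icc.2 hab) (Set.right_mem_Icc.2 hab) hab
  simp only [hk] at this
  nlinarith

/-- integral over a Lipschitz image w.r.t. 1-dimensional Hausdorff measure -/
lemma lintegral_image_lipschitzOnWith {K : NNReal} {h : ℝ → E2} {I : Set ℝ}
    (hI : MeasurableSet I) (hh : LipschitzOnWith K h I)
    {f : E2 → ENNReal} (hf : Measurable f) :
    ∫⁻ q in h '' I, f q ∂(μH[1]) ≤ (K : ENNReal) * ∫⁻ s in I, f (h s) := by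
  have hmeas : AEMeasurable h (volume.restrict I) :=
    (hh.continuousOn.aemeasurable hI)
  set ν := Measure.map h (volume.restrict I) with hν
  have hle : (μH[1] : Measure E2).restrict (h '' I) ≤ (K : ENNReal) • ν := by
    rw [Measure.le_iff]
    intro t ht
    rw [Measure.restrict_apply ht, Measure.smul_apply, smul_eq_mul,
      Measure.map_apply_of_aemeasurable hmeas ht, Measure.restrict_apply' hI]
    calc μH[1] (t ∩ h '' I) ≤ μH[1] (h '' (h ⁻¹' t ∩ I)) := by
          apply measure_mono
          rintro y ⟨hyt, x, hxI, rfl⟩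
          exact ⟨x, ⟨hyt, hxI⟩, rfl⟩
      _ ≤ (K : ENNReal) ^ (1:ℝ) * μH[1] (h ⁻¹' t ∩ I) :=
          (hh.mono Set.inter_subset_right).hausdorffMeasure_image_le zero_le_one
      _ = (K : ENNReal) * volume (h ⁻¹' t ∩ I) := by
          rw [MeasureTheory.hausdorffMeasure_real, ENNReal.rpow_one]
  calc ∫⁻ q in h '' I, f q ∂(μH[1]) ≤ ∫⁻ q, f q ∂((K : ENNReal) • ν) :=
        lintegral_mono' hle le_rfl
    _ = (K : ENNReal) * ∫⁻ q, f q ∂ν := lintegral_smul_measure _ _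
    _ = (K : ENNReal) * ∫⁻ s in I, f (h s) := by
        rw [lintegral_map' hf.aemeasurable hmeas]




lemma exists_onb_snd {e : E2} (he : ‖e‖ = 1) :
    ∃ b : OrthonormalBasis (Fin 2) ℝ E2, b 1 = e := by
  have hKne : (ℝ ∙ e)ᗮ ≠ ⊥ := by
    intro hbot
    have htop : (ℝ ∙ e) = ⊤ := Submodule.orthogonal_eq_bot_iff.mp hbot
    have h1 : Module.finrank ℝ (ℝ ∙ e) ≤ 1 := finrank_span_le_card {e} |>.trans (by simp)
    have h2 : Module.finrank ℝ E2 = 2 := by simp [finrank_euclideanSpace]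
    rw [htop] at h1
    rw [finrank_top] at h1
    omega
  obtain ⟨w, hwK, hw0⟩ := Submodule.exists_mem_ne_zero_of_ne_bot hKne
  set τ : E2 := ‖w‖⁻¹ • w with hτ
  have hwn : ‖w‖ ≠ 0 := norm_ne_zero_iff.mpr hw0
  have hτn : ‖τ‖ = 1 := by
    rw [hτ, norm_smul, norm_inv, norm_norm, inv_mul_cancel₀ hwn]
  have hτe : ⟪τ, e⟫ = 0 := by
    have := (Submodule.mem_orthogonal _ w).mp hwK e (Submodule.mem_span_singleton_self e)
    rw [hτ, real_inner_smul_left]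
    rw [real_inner_comm] at this
    rw [this, mul_zero]
  have hon : Orthonormal ℝ ![τ, e] := by
    have h00 : ⟪τ, τ⟫ = (1:ℝ) := by
      rw [real_inner_self_eq_norm_mul_norm, hτn]; norm_num
    have h11 : ⟪e, e⟫ = (1:ℝ) := by
      rw [real_inner_self_eq_norm_mul_norm, he]; norm_num
    have h10 : ⟪e, τ⟫ = (0:ℝ) := by rw [real_inner_comm]; exact hτe
    rw [orthonormal_iff_ite]
    intro i j
    fin_cases i <;> fin_cases j
    · simpa using h00
    · simpa using hτe
    · simpa using h10
    · simpa using h11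
  have hcard : Fintype.card (Fin 2) = Module.finrank ℝ E2 := by
    simp [finrank_euclideanSpace]
  let bb : Module.Basis (Fin 2) ℝ E2 :=
    basisOfLinearIndependentOfCardEqFinrank hon.linearIndependent hcard
  have hbb : ⇑bb = ![τ, e] :=
    coe_basisOfLinearIndependentOfCardEqFinrank hon.linearIndependent hcard
  refine ⟨bb.toOrthonormalBasis (by rwa [hbb]), ?_⟩
  have : ⇑(bb.toOrthonormalBasis (by rwa [hbb])) = ![τ, e] := by
    rw [Module.Basis.coe_toOrthonormalBasis, hbb]
  rw [this]
  simp

lemma phi_pack (p : E2) (b : OrthonormalBasis (Fin 2) ℝ E2) :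
    MeasurePreserving (fun q : ℝ × ℝ => p + (q.1 • b 0 + q.2 • b 1)) volume volume ∧
    MeasurableEmbedding (fun q : ℝ × ℝ => p + (q.1 • b 0 + q.2 • b 1)) ∧
    (∀ S : Set (ℝ × ℝ), IsOpen S →
      IsOpen ((fun q : ℝ × ℝ => p + (q.1 • b 0 + q.2 • b 1)) '' S)) := by
  set φ : ℝ × ℝ → E2 := fun q => p + (q.1 • b 0 + q.2 • b 1) with hφ
  have hrepr : ∀ q : ℝ × ℝ,
      b.repr.symm ((MeasurableEquiv.toLp 2 (Fin 2 → ℝ))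
        (MeasurableEquiv.finTwoArrow.symm q)) = q.1 • b 0 + q.2 • b 1 := by
    intro q
    apply b.repr.injective
    rw [LinearIsometryEquiv.apply_symm_apply]
    ext i
    simp only [map_add, LinearIsometryEquiv.map_smul]
    rw [b.repr_self, b.repr_self]
    fin_cases i <;>
      simp [EuclideanSpace.single_apply, MeasurableEquiv.finTwoArrow,
        MeasurableEquiv.toLp] <;> rfl
  have hcomp : φ = (fun y => p + y) ∘ (⇑b.repr.symm) ∘
      (⇑(MeasurableEquiv.toLp 2 (Fin 2 → ℝ))) ∘
      (⇑MeasurableEquiv.finTwoArrow.symm) := by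
    funext q
    simp only [Function.comp_apply, hφ, hrepr q]
  have hMP : MeasurePreserving φ volume volume := by
    rw [hcomp]
    exact (measurePreserving_add_left volume p).comp
      ((b.measurePreserving_repr_symm).comp
        ((PiLp.volume_preserving_toLp (Fin 2)).comp
          ((volume_preserving_finTwoArrow ℝ).symm _)))
  have hcont : Continuous φ := by
    apply continuous_const.add
    exact ((continuous_fst.smul continuous_const).add
      (continuous_snd.smul continuous_const))
  -- left inverse
  have honi : ∀ i j : Fin 2, ⟪b i, b j⟫ = if i = j then 1 else 0 :=
    orthonormal_iff_ite.mp b.orthonormal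
  set φinv : E2 → ℝ × ℝ := fun y => (⟪b 0, y - p⟫, ⟪b 1, y - p⟫) with hφinv
  have hli : ∀ q, φinv (φ q) = q := by
    intro q
    simp only [hφinv, hφ, add_sub_cancel_left]
    rw [inner_add_right, inner_add_right, real_inner_smul_right, real_inner_smul_right,
      real_inner_smul_right, real_inner_smul_right, honi 0 0, honi 0 1, honi 1 0, honi 1 1]
    simp
  have hinj : Function.Injective φ := Function.LeftInverse.injective hli
  have hri : ∀ y, φ (φinv y) = y := by
    intro y
    simp only [hφinv, hφ]
    have := b.sum_repr (y - p)
    rw [Fin.sum_univ_two] at this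
    rw [b.repr_apply_apply, b.repr_apply_apply] at this
    rw [this]
    abel
  have hcontinv : Continuous φinv := by
    apply Continuous.prodMk
    · exact (continuous_const.inner (continuous_id.sub continuous_const))
    · exact (continuous_const.inner (continuous_id.sub continuous_const))
  refine ⟨hMP, hcont.measurable.measurableEmbedding hinj, ?_⟩
  intro S hS
  have : φ '' S = φinv ⁻¹' S := by
    ext y
    constructor
    · rintro ⟨q, hq, rfl⟩
      rwa [Set.mem_preimage, hli]
    · intro hy
      exact ⟨φinv y, hy, hri y⟩
  rw [this]
  exact hS.preimage hcontinv

lemma fderiv_eq_inner_gradient (f : E2 → ℝ) (x y : E2) :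
    fderiv ℝ f x y = ⟪gradient f x, y⟫ := by
  rw [gradient, InnerProductSpace.toDual_symm_apply]

lemma young_pair (lam aa bb : ℝ) (hlam : 0 < lam) :
    aa * bb ≤ lam/2 * aa^2 + 1/(2*lam) * bb^2 := by
  have h1 := sq_nonneg (lam * aa - bb)
  have heq : lam/2 * aa^2 + 1/(2*lam) * bb^2 - aa * bb = (lam*aa - bb)^2/(2*lam) := by
    field_simp
    ring
  nlinarith [div_nonneg h1 (by positivity : (0:ℝ) ≤ 2*lam)]

lemma sqrt_combo (sA sB : ℝ) (hA : 0 < sA) (hB : 0 < sB) :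
    (sB/sA)/2 * sA^2 + 1/(2*(sB/sA)) * sB^2 = sB * sA := by
  field_simp
  ring

set_option maxHeartbeats 2000000 in
lemma local_trace (Ω : Set E2) (F : E2 → ℝ) (hF : ContDiff ℝ (⊤ : ℕ∞) F)
    (hΩF : Ω = {x : E2 | F x < 0}) (hfr : frontier Ω = {x : E2 | F x = 0})
    {p : E2} (hp : p ∈ frontier Ω) (hgrad : gradient F p ≠ 0) :
    ∃ V : Set E2, IsOpen V ∧ p ∈ V ∧ ∃ c : ENNReal, c ≠ ⊤ ∧
      ∀ (U : Set E2) (ψ : E2 → ℝ), IsOpen U → closure Ω ⊆ U → ContDiffOn ℝ 1 ψ U →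
        (∫⁻ q in frontier Ω ∩ V, ENNReal.ofReal ((ψ q)^2) ∂(μH[1])) ≤
          c * ((∫⁻ q in Ω, ENNReal.ofReal ((ψ q)^2)) +
               (∫⁻ q in Ω, ENNReal.ofReal (2 * |ψ q| * ‖gradient ψ q‖))) := by
  have hFd : Differentiable ℝ F := hF.differentiable (by simp)
  have hFc : Continuous F := hF.continuous
  have hΩo : IsOpen Ω := by rw [hΩF]; exact isOpen_lt hFc continuous_const
  set v := gradient F p with hv
  have hnv : 0 < ‖v‖ := norm_pos_iff.mpr hgrad
  set m : ℝ := ‖v‖ / 2 with hm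
  have hm0 : 0 < m := by positivity
  set e : E2 := ‖v‖⁻¹ • v with he_def
  have he : ‖e‖ = 1 := by
    rw [he_def, norm_smul, norm_inv, norm_norm, inv_mul_cancel₀ hnv.ne']
  obtain ⟨b, hb1⟩ := exists_onb_snd he
  set τ : E2 := b 0 with hτ_def
  have hτn : ‖τ‖ = 1 := b.orthonormal.1 0
  obtain ⟨hMP, hEMB, hOpenMap⟩ := phi_pack p b
  rw [hb1] at hMP hEMB hOpenMap
  set φ : ℝ × ℝ → E2 := fun q => p + (q.1 • τ + q.2 • e) with hφ_def
  have hφcont : Continuous φ := by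
    apply continuous_const.add
    exact ((continuous_fst.smul continuous_const).add
      (continuous_snd.smul continuous_const))
  have hφm : Measurable φ := hφcont.measurable
  -- derivative data of F
  set DFe : E2 → ℝ := fun x => fderiv ℝ F x e with hDFe_def
  set DFτ : E2 → ℝ := fun x => fderiv ℝ F x τ with hDFτ_def
  have hDFe_cont : Continuous DFe :=
    (hF.continuous_fderiv (by simp)).clm_apply continuous_const
  have hDFτ_cont : Continuous DFτ :=
    (hF.continuous_fderiv (by simp)).clm_apply continuous_const
  have hDFep : DFe p = ‖v‖ := by
    show (fderiv ℝ F p) e = ‖v‖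
    rw [fderiv_eq_inner_gradient F p e, he_def]
    rw [real_inner_smul_right, real_inner_self_eq_norm_mul_norm]
    rw [← hv]
    field_simp
  -- radius r
  obtain ⟨r, hr0, hrball⟩ : ∃ r > 0, ∀ x ∈ Metric.ball p (3*r), m < DFe x := by
    have hop : IsOpen {x : E2 | m < DFe x} := isOpen_lt continuous_const hDFe_cont
    have hpmem : p ∈ {x : E2 | m < DFe x} := by
      simp only [Set.mem_setOf_eq, hDFep, hm]; linarith
    obtain ⟨ε, hε, hball⟩ := Metric.isOpen_iff.mp hop p hpmem
    exact ⟨ε/3, by linarith, fun x hx => hball (by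
      rw [Metric.mem_ball] at hx ⊢; linarith)⟩
  -- the slice function G
  set G : ℝ → ℝ → ℝ := fun s t => F (φ (s, t)) with hG_def
  have hφt : ∀ s t : ℝ, HasDerivAt (fun t' => φ (s, t')) e t := by
    intro s t
    have heq : (fun t' : ℝ => φ (s, t')) = fun t' => (p + s • τ) + t' • e := by
      funext t'; rw [hφ_def]; simp; abel
    rw [heq]
    simpa using ((hasDerivAt_id t).smul_const e).const_add (p + s • τ)
  have hφs : ∀ s t : ℝ, HasDerivAt (fun s' => φ (s', t)) τ s := by
    intro s t
    have heq : (fun s' : ℝ => φ (s', t)) = fun s' => (p + t • e) + s' • τ := by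
      funext s'; rw [hφ_def]; simp; abel
    rw [heq]
    simpa using ((hasDerivAt_id s).smul_const τ).const_add (p + t • e)
  have hGt : ∀ s t : ℝ, HasDerivAt (fun t' => G s t') (DFe (φ (s,t))) t :=
    fun s t => ((hFd (φ (s,t))).hasFDerivAt.comp_hasDerivAt t (hφt s t))
  have hGs : ∀ s t : ℝ, HasDerivAt (fun s' => G s' t) (DFτ (φ (s,t))) s :=
    fun s t => ((hFd (φ (s,t))).hasFDerivAt.comp_hasDerivAt s (hφs s t))
  have hφdist : ∀ s t : ℝ, dist (φ (s,t)) p ≤ |s| + |t| := by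
    intro s t
    rw [dist_eq_norm, hφ_def]
    simp only [add_sub_cancel_left]
    calc ‖s • τ + t • e‖ ≤ ‖s • τ‖ + ‖t • e‖ := norm_add_le _ _
      _ = |s| + |t| := by rw [norm_smul, norm_smul, hτn, he]; simp [Real.norm_eq_abs]
  have hbox : ∀ s t : ℝ, |s| ≤ r → |t| ≤ r → m < DFe (φ (s,t)) := by
    intro s t hs ht
    apply hrball
    rw [Metric.mem_ball]
    have := hφdist s t
    linarith
  -- strict monotonicity in t
  have hmono : ∀ s : ℝ, |s| ≤ r → StrictMonoOn (fun t => G s t) (Set.Icc (-r) r) := by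
    intro s hs
    apply strictMonoOn_of_deriv_pos (convex_Icc _ _)
    · exact fun t _ => (hGt s t).continuousAt.continuousWithinAt
    · intro t ht
      rw [interior_Icc] at ht
      rw [(hGt s t).deriv]
      have := hbox s t hs (abs_le.mpr ⟨le_of_lt ht.1, le_of_lt ht.2⟩)
      linarith
  -- quantitative lower MVT in t
  have hmvt : ∀ s : ℝ, |s| ≤ r → ∀ t t' : ℝ, t ∈ Set.Icc (-r) r → t' ∈ Set.Icc (-r) r →
      t ≤ t' → m * (t' - t) ≤ G s t' - G s t := by
    intro s hs t t' ht ht' htt'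
    apply mvt_lower htt'
    · exact fun x hx => hGt s x
    · intro x hx
      have hxI : x ∈ Set.Icc (-r) r := ⟨le_trans ht.1 hx.1, le_trans hx.2 ht'.2⟩
      exact le_of_lt (hbox s x hs (abs_le.mpr ⟨hxI.1, hxI.2⟩))
  have hFp : F p = 0 := by
    have := hp; rw [hfr] at this; exact this
  have hG00 : G 0 0 = 0 := by
    rw [hG_def]; simp only [hφ_def]; simp [hFp]
  -- signs at t = ±r/2 for s = 0
  have hIcc_r2 : ∀ x : ℝ, |x| ≤ r/2 → x ∈ Set.Icc (-r) r := fun x hx => by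
    have := abs_le.mp hx; constructor <;> linarith [this.1, this.2]
  have hpos0 : 0 < G 0 (r/2) := by
    have h0m : (0:ℝ) ∈ Set.Icc (-r) r := by constructor <;> linarith
    have := hmvt 0 (by simp [abs_of_nonneg, le_of_lt hr0]) 0 (r/2) h0m
      (hIcc_r2 _ (by rw [abs_of_nonneg (by linarith)])) (by linarith)
    rw [hG00] at this
    nlinarith
  have hneg0 : G 0 (-(r/2)) < 0 := by
    have h0m : (0:ℝ) ∈ Set.Icc (-r) r := by constructor <;> linarith
    have := hmvt 0 (by simp [abs_of_nonneg, le_of_lt hr0]) (-(r/2)) 0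
      (hIcc_r2 _ (by rw [abs_neg, abs_of_nonneg (by linarith)])) h0m (by linarith)
    rw [hG00] at this
    nlinarith
  -- choose a
  have hGcont_s : ∀ t : ℝ, Continuous (fun s => G s t) := by
    intro t
    exact hFc.comp (hφcont.comp (continuous_id.prodMk continuous_const))
  obtain ⟨a, ha0, har, hsign⟩ : ∃ a : ℝ, 0 < a ∧ a ≤ r ∧
      ∀ s : ℝ, |s| < a → 0 < G s (r/2) ∧ G s (-(r/2)) < 0 := by
    have hop : IsOpen {s : ℝ | 0 < G s (r/2) ∧ G s (-(r/2)) < 0} :=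
      (isOpen_lt continuous_const (hGcont_s (r/2))).inter
        (isOpen_lt (hGcont_s (-(r/2))) continuous_const)
    have h0mem : (0:ℝ) ∈ {s : ℝ | 0 < G s (r/2) ∧ G s (-(r/2)) < 0} := ⟨hpos0, hneg0⟩
    obtain ⟨ε, hε, hball⟩ := Metric.isOpen_iff.mp hop 0 h0mem
    refine ⟨min (ε/2) r, by positivity, min_le_right _ _, fun s hs => ?_⟩
    apply hball
    rw [Metric.mem_ball, Real.dist_eq, sub_zero]
    have h1 : |s| < min (ε/2) r := hs
    have := lt_of_lt_of_le h1 (min_le_left _ _)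
    linarith
  set I : Set ℝ := Set.Ioo (-a) a with hI_def
  have hmemI_abs : ∀ s ∈ I, |s| ≤ r := by
    intro s hs
    have : |s| < a := abs_lt.mpr ⟨hs.1, hs.2⟩
    linarith
  have hmemI_lt : ∀ s ∈ I, |s| < a := fun s hs => abs_lt.mpr ⟨hs.1, hs.2⟩
  -- existence of root
  have hex : ∀ s ∈ I, ∃ t, t ∈ Set.Ioo (-(r/2)) (r/2) ∧ G s t = 0 := by
    intro s hs
    obtain ⟨hGp, hGn⟩ := hsign s (hmemI_lt s hs)
    have hcont : ContinuousOn (fun t => G s t) (Set.Icc (-(r/2)) (r/2)) :=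
      (hFc.comp (hφcont.comp (continuous_const.prodMk continuous_id))).continuousOn
    have hsub := intermediate_value_Ioo (by linarith : -(r/2) ≤ (r/2)) hcont
    have h0mem : (0:ℝ) ∈ Set.Ioo (G s (-(r/2))) (G s (r/2)) := ⟨hGn, hGp⟩
    obtain ⟨t, htmem, htz⟩ := hsub h0mem
    exact ⟨t, htmem, htz⟩
  set g : ℝ → ℝ := fun s => if h : s ∈ I then Classical.choose (hex s h) else 0 with hg_def
  have hgmem : ∀ s ∈ I, g s ∈ Set.Ioo (-(r/2)) (r/2) := by
    intro s hs
    simp only [hg_def, dif_pos hs]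
    exact (Classical.choose_spec (hex s hs)).1
  have hgz : ∀ s ∈ I, G s (g s) = 0 := by
    intro s hs
    simp only [hg_def, dif_pos hs]
    exact (Classical.choose_spec (hex s hs)).2
  have hgIcc : ∀ s ∈ I, g s ∈ Set.Icc (-r) r := by
    intro s hs
    have := hgmem s hs
    constructor <;> linarith [this.1, this.2]
  -- comparison
  have hlt : ∀ s ∈ I, ∀ t ∈ Set.Icc (-r) r, t < g s → G s t < 0 := by
    intro s hs t ht hlt'
    have := hmono s (hmemI_abs s hs) ht (hgIcc s hs) hlt'
    change G s t < G s (g s) at this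
    rwa [hgz s hs] at this
  have hgt2 : ∀ s ∈ I, ∀ t ∈ Set.Icc (-r) r, g s < t → 0 < G s t := by
    intro s hs t ht hlt'
    have := hmono s (hmemI_abs s hs) (hgIcc s hs) ht hlt'
    change G s (g s) < G s t at this
    rwa [hgz s hs] at this
  have huniq : ∀ s ∈ I, ∀ t ∈ Set.Icc (-r) r, G s t = 0 → t = g s := by
    intro s hs t ht hzero
    rcases lt_trichotomy t (g s) with h | h | h
    · exact absurd hzero (ne_of_lt (hlt s hs t ht h))
    · exact h
    · exact absurd hzero.symm (ne_of_lt (hgt2 s hs t ht h))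
  -- bound on the tangential derivative
  obtain ⟨M, hM1, hMb⟩ : ∃ M : ℝ, 1 ≤ M ∧
      ∀ s t : ℝ, |s| ≤ r → |t| ≤ r → |DFτ (φ (s,t))| ≤ M := by
    obtain ⟨C, hC⟩ := (isCompact_closedBall p (2*r)).exists_bound_of_continuousOn
      hDFτ_cont.continuousOn
    refine ⟨max C 1, le_max_right _ _, fun s t hs ht => ?_⟩
    have hmem : φ (s,t) ∈ Metric.closedBall p (2*r) := by
      rw [Metric.mem_closedBall]
      have := hφdist s t
      linarith
    calc |DFτ (φ (s,t))| = ‖DFτ (φ (s,t))‖ := (Real.norm_eq_abs _).symm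
      _ ≤ C := hC _ hmem
      _ ≤ max C 1 := le_max_left _ _
  have hMm : 0 < M / m := by positivity
  -- Lipschitz bound for g
  have hglip : ∀ s ∈ I, ∀ s' ∈ I, |g s - g s'| ≤ (M/m) * |s - s'| := by
    intro s hs s' hs'
    have h1 : m * |g s - g s'| ≤ |G s (g s') - G s (g s)| := by
      rcases le_total (g s) (g s') with h | h
      · have hq := hmvt s (hmemI_abs s hs) (g s) (g s') (hgIcc s hs) (hgIcc s' hs') h
        rw [abs_of_nonpos (by linarith), abs_of_nonneg (by nlinarith)]
        nlinarith
      · have hq := hmvt s (hmemI_abs s hs) (g s') (g s) (hgIcc s' hs') (hgIcc s hs) h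
        rw [abs_of_nonneg (by linarith), abs_sub_comm, abs_of_nonneg (by nlinarith)]
        nlinarith
    have h3 : |G s (g s') - G s' (g s')| ≤ M * |s - s'| := by
      have hconv : Convex ℝ (Set.Icc (-r) r) := convex_Icc _ _
      have hderiv : ∀ x ∈ Set.Icc (-r) r,
          HasDerivWithinAt (fun σ => G σ (g s')) (DFτ (φ (x, g s'))) (Set.Icc (-r) r) x :=
        fun x _ => (hGs x (g s')).hasDerivWithinAt
      have hbound : ∀ x ∈ Set.Icc (-r) r, ‖DFτ (φ (x, g s'))‖ ≤ M := by
        intro x hx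
        rw [Real.norm_eq_abs]
        exact hMb x (g s') (abs_le.mpr ⟨hx.1, hx.2⟩)
          (abs_le.mpr ⟨(hgIcc s' hs').1, (hgIcc s' hs').2⟩)
      have hsI : s ∈ Set.Icc (-r) r := by
        have := hmemI_abs s hs; exact ⟨neg_le_of_abs_le this, le_of_abs_le this⟩
      have hsI' : s' ∈ Set.Icc (-r) r := by
        have := hmemI_abs s' hs'; exact ⟨neg_le_of_abs_le this, le_of_abs_le this⟩
      have := hconv.norm_image_sub_le_of_norm_hasDerivWithin_le hderiv hbound hsI' hsI
      simpa [Real.norm_eq_abs] using this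
    have h2 : G s' (g s') = 0 := hgz s' hs'
    have h4 : G s (g s) = 0 := hgz s hs
    rw [h4, sub_zero] at h1
    rw [h2, sub_zero] at h3
    rw [div_mul_eq_mul_div, le_div_iff₀ hm0, mul_comm]
    calc m * |g s - g s'| ≤ |G s (g s')| := h1
      _ ≤ M * |s - s'| := h3
  have hgliponw : LipschitzOnWith (Real.toNNReal (M/m)) g I := by
    apply LipschitzOnWith.of_dist_le_mul
    intro s hs s' hs'
    rw [Real.dist_eq, Real.dist_eq, Real.coe_toNNReal _ (le_of_lt hMm)]
    exact hglip s hs s' hs'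
  have hgcont : ContinuousOn g I := hgliponw.continuousOn
  -- the boundary curve
  set h : ℝ → E2 := fun s => φ (s, g s) with hh_def
  set Kh : NNReal := Real.toNNReal (1 + M/m) with hKh_def
  have hhl : LipschitzOnWith Kh h I := by
    apply LipschitzOnWith.of_dist_le_mul
    intro s hs s' hs'
    have hsub : h s - h s' = (s - s') • τ + (g s - g s') • e := by
      simp only [hh_def, hφ_def]
      rw [sub_smul, sub_smul]
      abel
    rw [dist_eq_norm, hsub, Real.dist_eq, hKh_def,
      Real.coe_toNNReal _ (by positivity : (0:ℝ) ≤ 1 + M/m)]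
    calc ‖(s - s') • τ + (g s - g s') • e‖ ≤ ‖(s-s') • τ‖ + ‖(g s - g s') • e‖ :=
          norm_add_le _ _
      _ = |s - s'| + |g s - g s'| := by
          rw [norm_smul, norm_smul, hτn, he]; simp [Real.norm_eq_abs]
      _ ≤ |s - s'| + (M/m) * |s - s'| := by linarith [hglip s hs s' hs']
      _ = (1 + M/m) * |s - s'| := by ring
  -- the open neighbourhood V
  set V : Set E2 := φ '' (I ×ˢ Set.Ioo (-(r/2)) (r/2)) with hV_def
  have hVopen : IsOpen V := hOpenMap _ (isOpen_Ioo.prod isOpen_Ioo)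
  have hpV : p ∈ V := by
    have h0I : (0:ℝ) ∈ I := ⟨by linarith, by linarith⟩
    have h0J : (0:ℝ) ∈ Set.Ioo (-(r/2)) (r/2) := ⟨by linarith, by linarith⟩
    exact ⟨(0,0), Set.mk_mem_prod h0I h0J, by simp [hφ_def]⟩
  -- the region under the graph
  set Rg : Set (ℝ × ℝ) := {q : ℝ × ℝ | q.1 ∈ I ∧ q.2 ∈ Set.Ioo (g q.1 - r/2) (g q.1)}
    with hRg_def
  have hRgopen : IsOpen Rg := by
    have heq : Rg = (I ×ˢ (Set.univ : Set ℝ)) ∩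
        ((fun q : ℝ × ℝ => g q.1 - q.2) ⁻¹' (Set.Ioo 0 (r/2))) := by
      ext q
      simp only [hRg_def, Set.mem_setOf_eq, Set.mem_inter_iff, Set.mem_prod, Set.mem_univ,
        and_true, Set.mem_preimage, Set.mem_Ioo]
      constructor
      · rintro ⟨h1, h2, h3⟩; exact ⟨h1, by linarith, by linarith⟩
      · rintro ⟨h1, h2, h3⟩; exact ⟨h1, by linarith, by linarith⟩
    rw [heq]
    apply ContinuousOn.isOpen_inter_preimage ?_ (isOpen_Ioo.prod isOpen_univ) isOpen_Ioo
    apply ContinuousOn.sub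
    · exact hgcont.comp continuous_fst.continuousOn (fun q hq => hq.1)
    · exact continuous_snd.continuousOn
  have hRgIcc : ∀ q ∈ Rg, q.2 ∈ Set.Icc (-r) r := by
    rintro q ⟨hq1, hq2⟩
    have hgI := hgmem q.1 hq1
    constructor <;> [linarith [hq2.1, hgI.1]; linarith [hq2.2, hgI.2]]
  have hRgΩ : ∀ q ∈ Rg, φ q ∈ Ω := by
    intro q hq
    have hF0 := hlt q.1 hq.1 q.2 (hRgIcc q hq) hq.2.2
    rw [hΩF]
    show F (φ q) < 0
    rw [show φ q = φ (q.1, q.2) from rfl]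
    exact hF0
  have hcurve_fr : ∀ s ∈ I, h s ∈ frontier Ω := by
    intro s hs
    rw [hfr]
    exact hgz s hs
  have hfrV_sub : frontier Ω ∩ V ⊆ h '' I := by
    rintro y ⟨hyfr, q, hqmem, rfl⟩
    have hq1 : q.1 ∈ I := hqmem.1
    have hq2 : q.2 ∈ Set.Ioo (-(r/2)) (r/2) := hqmem.2
    have hFy : G q.1 q.2 = 0 := by
      rw [hfr] at hyfr
      show F (φ (q.1, q.2)) = 0
      rw [show φ (q.1, q.2) = φ q from rfl]
      exact hyfr
    have ht2 : q.2 ∈ Set.Icc (-r) r := by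
      constructor <;> [linarith [hq2.1]; linarith [hq2.2]]
    have heq2 : q.2 = g q.1 := huniq q.1 hq1 q.2 ht2 hFy
    refine ⟨q.1, hq1, ?_⟩
    show φ (q.1, g q.1) = φ q
    rw [← heq2]
  -- the constant
  set d : ENNReal := ENNReal.ofReal (r/2) with hd_def
  have hd0 : d ≠ 0 := by
    rw [hd_def]
    simp only [ne_eq, ENNReal.ofReal_eq_zero, not_le]
    linarith
  have hdtop : d ≠ ⊤ := ENNReal.ofReal_ne_top
  set c : ENNReal := (Kh : ENNReal) * (d⁻¹ + 1) with hc_def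
  have hctop : c ≠ ⊤ := by
    apply ENNReal.mul_ne_top ENNReal.coe_ne_top
    exact ENNReal.add_ne_top.mpr ⟨ENNReal.inv_ne_top.mpr hd0, ENNReal.one_ne_top⟩
  refine ⟨V, hVopen, hpV, c, hctop, ?_⟩
  intro U ψ hUopen hclU hψ
  have hΩU : Ω ⊆ U := subset_closure.trans hclU
  have hψc : ContinuousOn ψ U := hψ.continuousOn
  have hfdc : ContinuousOn (fderiv ℝ ψ) U := hψ.continuousOn_fderiv_of_isOpen hUopen le_rfl
  have hgradc : ContinuousOn (gradient ψ) U := by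
    have heq : gradient ψ = fun x => (InnerProductSpace.toDual ℝ E2).symm (fderiv ℝ ψ x) := rfl
    rw [heq]
    exact (InnerProductSpace.toDual ℝ E2).symm.continuous.comp_continuousOn hfdc
  set w : E2 → ℝ := fun y => 2 * |ψ y| * ‖gradient ψ y‖ with hw_def
  have hwcont : ContinuousOn w U := (continuousOn_const.mul hψc.abs).mul hgradc.norm
  have hw0 : ∀ y, 0 ≤ w y := fun y => by rw [hw_def]; positivity
  set fψ : E2 → ENNReal := fun x => ENNReal.ofReal (U.indicator (fun y => (ψ y)^2) x)
    with hfψ_def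
  have hfψm : Measurable fψ :=
    (measurable_indicator_continuousOn hUopen (hψc.pow 2)).ennreal_ofReal
  have hfψeq : ∀ x ∈ U, fψ x = ENNReal.ofReal ((ψ x)^2) := fun x hx => by
    rw [hfψ_def]; simp only [Set.indicator_of_mem hx]
  set fw : E2 → ENNReal := fun x => ENNReal.ofReal (U.indicator w x) with hfw_def
  have hfwm : Measurable fw := (measurable_indicator_continuousOn hUopen hwcont).ennreal_ofReal
  have hfweq : ∀ x ∈ U, fw x = ENNReal.ofReal (w x) := fun x hx => by
    rw [hfw_def]; simp only [Set.indicator_of_mem hx]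
  set Fb : ℝ × ℝ → ENNReal := fun q => fψ (φ q) + d * fw (φ q) with hFb_def
  have hFbm : Measurable Fb := ((hfψm.comp hφm).add ((hfwm.comp hφm).const_mul d))
  -- the key pointwise-in-s estimate
  have hkey : ∀ s ∈ I, d * ENNReal.ofReal ((ψ (h s))^2) ≤ ∫⁻ t, Rg.indicator Fb (s, t) := by
    intro s hs
    set t₀ := g s with ht₀_def
    have hgI := hgmem s hs
    set J : Set ℝ := Set.Icc (t₀ - r/2) t₀ with hJ_def
    have hJle : t₀ - r/2 ≤ t₀ := by linarith
    have hsegcl : ∀ t ∈ J, φ (s, t) ∈ closure Ω := by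
      intro t ht
      rcases eq_or_lt_of_le ht.2 with heq | hlt'
      · have hfrm : φ (s, t) ∈ frontier Ω := by
          rw [heq]; exact hcurve_fr s hs
        exact frontier_subset_closure hfrm
      · apply subset_closure
        rw [hΩF]
        have htIcc : t ∈ Set.Icc (-r) r := by
          constructor
          · have := ht.1; have := hgI.1; linarith
          · have := hgI.2; linarith [ht.2]
        exact hlt s hs t htIcc hlt'
    have hsegU : ∀ t ∈ J, φ (s, t) ∈ U := fun t ht => hclU (hsegcl t ht)
    set u : ℝ → ℝ := fun t => ψ (φ (s, t)) with hu_def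
    set du : ℝ → ℝ := fun t => fderiv ℝ ψ (φ (s, t)) e with hdu_def
    have hud : ∀ t ∈ J, HasDerivAt u (du t) t := by
      intro t ht
      have hdiff : DifferentiableAt ℝ ψ (φ (s,t)) :=
        (hψ.differentiableOn one_ne_zero).differentiableAt (hUopen.mem_nhds (hsegU t ht))
      exact hdiff.hasFDerivAt.comp_hasDerivAt t (hφt s t)
    have husq : ∀ t ∈ J, HasDerivAt (fun t' => (u t')^2) (2 * u t * du t) t := by
      intro t ht
      have := (hud t ht).fun_pow 2
      exact this.congr_deriv (by norm_num)
    have hcurvecont : Continuous (fun t : ℝ => φ (s, t)) :=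
      hφcont.comp (continuous_const.prodMk continuous_id)
    have hucont : ContinuousOn u J := hψc.comp hcurvecont.continuousOn hsegU
    have hducont : ContinuousOn du J := by
      have h1 : ContinuousOn (fun t => fderiv ℝ ψ (φ (s,t))) J :=
        hfdc.comp hcurvecont.continuousOn hsegU
      exact h1.clm_apply continuousOn_const
    have hwcurve : ContinuousOn (fun t => w (φ (s,t))) J :=
      hwcont.comp hcurvecont.continuousOn hsegU
    have hdu_le : ∀ t ∈ J, |du t| ≤ ‖gradient ψ (φ (s,t))‖ := by
      intro t ht
      show |fderiv ℝ ψ (φ (s, t)) e| ≤ _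
      rw [fderiv_eq_inner_gradient]
      calc |⟪gradient ψ (φ (s,t)), e⟫| ≤ ‖gradient ψ (φ (s,t))‖ * ‖e‖ :=
            abs_real_inner_le_norm _ _
        _ = ‖gradient ψ (φ (s,t))‖ := by rw [he, mul_one]
    have hWint : IntervalIntegrable (fun t => w (φ (s,t))) volume (t₀ - r/2) t₀ := by
      apply ContinuousOn.intervalIntegrable
      rwa [Set.uIcc_of_le hJle]
    set Wc : ℝ := ∫ r' in (t₀ - r/2)..t₀, w (φ (s, r')) with hWc_def
    have hWc0 : 0 ≤ Wc := intervalIntegral.integral_nonneg hJle (fun x _ => hw0 _)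
    have hFTC : ∀ t ∈ J, (u t₀)^2 ≤ (u t)^2 + Wc := by
      intro t ht
      have huIcc : Set.uIcc t t₀ = Set.Icc t t₀ := Set.uIcc_of_le ht.2
      have hsub : Set.Icc t t₀ ⊆ J := Set.Icc_subset_Icc ht.1 le_rfl
      have hsub' : Set.uIcc t t₀ ⊆ J := by rw [huIcc]; exact hsub
      have hintderiv : IntervalIntegrable (fun t' => 2 * u t' * du t') volume t t₀ := by
        apply ContinuousOn.intervalIntegrable
        exact ((continuousOn_const.mul (hucont.mono hsub')).mul (hducont.mono hsub'))
      have hintw : IntervalIntegrable (fun t' => w (φ (s,t'))) volume t t₀ := by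
        apply ContinuousOn.intervalIntegrable
        exact hwcurve.mono hsub'
      have hint : ∫ r' in t..t₀, (2 * u r' * du r') = (u t₀)^2 - (u t)^2 :=
        intervalIntegral.integral_eq_sub_of_hasDerivAt
          (fun r' hr' => husq r' (hsub' hr')) hintderiv
      have hb1 : ∫ r' in t..t₀, (2 * u r' * du r') ≤ ∫ r' in t..t₀, w (φ (s, r')) := by
        apply intervalIntegral.integral_mono_on ht.2 hintderiv hintw
        intro x hx
        calc 2 * u x * du x ≤ |2 * u x * du x| := le_abs_self _
          _ = 2 * |u x| * |du x| := by rw [abs_mul, abs_mul]; norm_num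
          _ ≤ 2 * |u x| * ‖gradient ψ (φ (s,x))‖ := by
              apply mul_le_mul_of_nonneg_left (hdu_le x (hsub hx)) (by positivity)
          _ = w (φ (s,x)) := rfl
      have hb2 : ∫ r' in t..t₀, w (φ (s,r')) ≤ Wc := by
        rw [hWc_def]
        apply intervalIntegral.integral_mono_interval ht.1 ht.2 le_rfl
        · filter_upwards with x using hw0 _
        · exact hWint
      linarith
    set Io : Set ℝ := Set.Ioo (t₀ - r/2) t₀ with hIo_def
    have hIoJ : Io ⊆ J := Set.Ioo_subset_Icc_self
    have hIom : MeasurableSet Io := measurableSet_Ioo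
    have hvolIo : volume Io = ENNReal.ofReal (r/2) := by
      rw [Real.volume_Ioo]; congr 1; ring
    have huint : IntegrableOn (fun t => (u t)^2 + Wc) Io volume := by
      apply IntegrableOn.mono_set _ hIoJ
      apply ContinuousOn.integrableOn_compact isCompact_Icc
      exact ((hucont.pow 2).add continuousOn_const)
    have hconstint : IntegrableOn (fun _ : ℝ => (u t₀)^2) Io volume := by
      exact integrableOn_const (by rw [hvolIo]; exact ENNReal.ofReal_ne_top)
    have hreal : (r/2) * (ψ (h s))^2 ≤ ∫ t in Io, ((u t)^2 + Wc) := by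
      have huh : ψ (h s) = u t₀ := rfl
      rw [huh]
      have hconst : ∫ t in Io, (u t₀)^2 ∂volume = (r/2) * (u t₀)^2 := by
        rw [setIntegral_const, measureReal_def, hvolIo, ENNReal.toReal_ofReal (by linarith), smul_eq_mul]
      rw [← hconst]
      exact setIntegral_mono_on hconstint huint hIom (fun t ht => hFTC t (hIoJ ht))
    have hIoU : ∀ t ∈ Io, φ (s,t) ∈ U := fun t ht => hsegU t (hIoJ ht)
    have hWclift : ENNReal.ofReal Wc ≤ ∫⁻ t in Io, ENNReal.ofReal (w (φ (s,t))) := by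
      have hIocJ : Set.Ioc (t₀ - r/2) t₀ ⊆ J := Set.Ioc_subset_Icc_self
      have hIoceq : Wc = ∫ t in Set.Ioc (t₀ - r/2) t₀, w (φ (s,t)) := by
        rw [hWc_def, intervalIntegral.integral_of_le hJle]
      have hwin : IntegrableOn (fun t => w (φ (s,t))) (Set.Ioc (t₀ - r/2) t₀) volume := by
        apply IntegrableOn.mono_set _ hIocJ
        exact hwcurve.integrableOn_compact isCompact_Icc
      rw [hIoceq, ofReal_integral_eq_lintegral_ofReal hwin
        (ae_of_all _ (fun t => hw0 _))]
      apply le_of_eq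
      apply setLIntegral_congr
      exact Ioo_ae_eq_Ioc.symm
    calc d * ENNReal.ofReal ((ψ (h s))^2)
        ≤ ENNReal.ofReal (∫ t in Io, ((u t)^2 + Wc)) := by
          rw [hd_def, ← ENNReal.ofReal_mul (by linarith : (0:ℝ) ≤ r/2)]
          exact ENNReal.ofReal_le_ofReal hreal
      _ = ∫⁻ t in Io, ENNReal.ofReal ((u t)^2 + Wc) :=
          ofReal_integral_eq_lintegral_ofReal huint
            (ae_of_all _ (fun t => by positivity))
      _ = ∫⁻ t in Io, (ENNReal.ofReal ((u t)^2) + ENNReal.ofReal Wc) :=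
          lintegral_congr (fun t => ENNReal.ofReal_add (sq_nonneg _) hWc0)
      _ = (∫⁻ t in Io, ENNReal.ofReal ((u t)^2)) + ENNReal.ofReal Wc * volume Io := by
          rw [lintegral_add_right _ measurable_const, setLIntegral_const]
      _ ≤ (∫⁻ t in Io, fψ (φ (s,t))) + d * ∫⁻ t in Io, ENNReal.ofReal (w (φ (s,t))) := by
          apply add_le_add
          · apply le_of_eq
            apply setLIntegral_congr_fun hIom
            exact (fun t ht => (hfψeq _ (hIoU t ht)).symm)
          · rw [hvolIo, ← hd_def, mul_comm]
            exact mul_le_mul_right hWclift d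
      _ = (∫⁻ t in Io, fψ (φ (s,t))) + d * ∫⁻ t in Io, fw (φ (s,t)) := by
          congr 1
          apply congrArg
          apply setLIntegral_congr_fun hIom
          exact (fun t ht => (hfweq _ (hIoU t ht)).symm)
      _ = ∫⁻ t in Io, Fb (s, t) := by
          symm
          calc ∫⁻ t in Io, Fb (s, t)
              = ∫⁻ t in Io, ((fun t => fψ (φ (s,t))) t + (fun t => d * fw (φ (s,t))) t) := rfl
            _ = (∫⁻ t in Io, fψ (φ (s,t))) + ∫⁻ t in Io, d * fw (φ (s,t)) :=
                lintegral_add_left (hfψm.comp (hφm.comp measurable_prodMk_left)) _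
            _ = (∫⁻ t in Io, fψ (φ (s,t))) + d * ∫⁻ t in Io, fw (φ (s,t)) := by
                rw [lintegral_const_mul' _ _ hdtop]
      _ = ∫⁻ t, Io.indicator (fun t => Fb (s,t)) t := by
          rw [lintegral_indicator hIom]
      _ = ∫⁻ t, Rg.indicator Fb (s, t) := by
          apply lintegral_congr
          intro t
          rw [Set.indicator_apply, Set.indicator_apply]
          have hmem : t ∈ Io ↔ (s, t) ∈ Rg := by
            simp only [hIo_def, hRg_def, Set.mem_setOf_eq, Set.mem_Ioo]
            constructor
            · intro ht; exact ⟨hs, ht⟩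
            · intro ht; exact ht.2
          by_cases ht : t ∈ Io
          · rw [if_pos ht, if_pos (hmem.mp ht)]
          · rw [if_neg ht, if_neg (fun hc => ht (hmem.mpr hc))]
  -- outer measurability
  have houter : Measurable (fun s => ∫⁻ t, Rg.indicator Fb (s, t)) := by
    apply Measurable.lintegral_prod_right'
    exact hFbm.indicator hRgopen.measurableSet
  set X : ENNReal := ∫⁻ s in I, ENNReal.ofReal ((ψ (h s))^2) with hX_def
  set Al : ENNReal := ∫⁻ q in Ω, ENNReal.ofReal ((ψ q)^2) with hA_def
  set Dl : ENNReal := ∫⁻ q in Ω, ENNReal.ofReal (2 * |ψ q| * ‖gradient ψ q‖) with hD_def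
  have himg : φ '' Rg ⊆ Ω := by
    rintro y ⟨q, hq, rfl⟩
    exact hRgΩ q hq
  have hmain : d * X ≤ Al + d * Dl := by
    calc d * X = ∫⁻ s in I, d * ENNReal.ofReal ((ψ (h s))^2) := by
          rw [hX_def, lintegral_const_mul' _ _ hdtop]
      _ ≤ ∫⁻ s in I, ∫⁻ t, Rg.indicator Fb (s, t) := setLIntegral_mono houter hkey
      _ ≤ ∫⁻ s, ∫⁻ t, Rg.indicator Fb (s, t) := setLIntegral_le_lintegral _ _
      _ = ∫⁻ q, Rg.indicator Fb q ∂(volume : Measure (ℝ × ℝ)) := by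
          rw [Measure.volume_eq_prod]
          exact (lintegral_prod _ (hFbm.indicator hRgopen.measurableSet).aemeasurable).symm
      _ = ∫⁻ q in Rg, Fb q := lintegral_indicator hRgopen.measurableSet _
      _ = ∫⁻ y in φ '' Rg, (fψ y + d * fw y) :=
          hMP.setLIntegral_comp_emb hEMB (fun y => fψ y + d * fw y) Rg
      _ ≤ ∫⁻ y in Ω, (fψ y + d * fw y) :=
          lintegral_mono' (Measure.restrict_mono himg le_rfl) le_rfl
      _ = (∫⁻ y in Ω, fψ y) + d * ∫⁻ y in Ω, fw y := by
          rw [lintegral_add_left hfψm, lintegral_const_mul' _ _ hdtop]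
      _ = Al + d * Dl := by
          congr 1
          · rw [hA_def]
            apply setLIntegral_congr_fun hΩo.measurableSet
            exact (fun y hy => hfψeq y (hΩU hy))
          · rw [hD_def]
            congr 1
            apply setLIntegral_congr_fun hΩo.measurableSet
            exact (fun y hy => hfweq y (hΩU hy))
  have hcurveside : (∫⁻ q in frontier Ω ∩ V, ENNReal.ofReal ((ψ q)^2) ∂(μH[1])) ≤
      (Kh : ENNReal) * X := by
    have hfrVm : MeasurableSet (frontier Ω ∩ V) :=
      isClosed_frontier.measurableSet.inter hVopen.measurableSet
    calc ∫⁻ q in frontier Ω ∩ V, ENNReal.ofReal ((ψ q)^2) ∂μH[1]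
        = ∫⁻ q in frontier Ω ∩ V, fψ q ∂μH[1] := by
          apply setLIntegral_congr_fun hfrVm
          exact (fun q hq =>
            (hfψeq q (hclU (frontier_subset_closure hq.1))).symm)
      _ ≤ ∫⁻ q in h '' I, fψ q ∂μH[1] :=
          lintegral_mono' (Measure.restrict_mono hfrV_sub le_rfl) le_rfl
      _ ≤ (Kh : ENNReal) * ∫⁻ s in I, fψ (h s) :=
          lintegral_image_lipschitzOnWith measurableSet_Ioo hhl hfψm
      _ = (Kh : ENNReal) * X := by
          rw [hX_def]
          congr 1
          apply setLIntegral_congr_fun measurableSet_Ioo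
          exact (fun s hs =>
            hfψeq _ (hclU (frontier_subset_closure (hcurve_fr s hs))))
  have hXle : X ≤ d⁻¹ * Al + Dl := by
    have h1 : X = d⁻¹ * (d * X) := by
      rw [← mul_assoc, ENNReal.inv_mul_cancel hd0 hdtop, one_mul]
    rw [h1]
    calc d⁻¹ * (d * X) ≤ d⁻¹ * (Al + d * Dl) := mul_le_mul_right hmain _
      _ = d⁻¹ * Al + (d⁻¹ * d) * Dl := by rw [mul_add, mul_assoc]
      _ = d⁻¹ * Al + Dl := by rw [ENNReal.inv_mul_cancel hd0 hdtop, one_mul]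
  calc (∫⁻ q in frontier Ω ∩ V, ENNReal.ofReal ((ψ q)^2) ∂μH[1])
      ≤ (Kh : ENNReal) * X := hcurveside
    _ ≤ (Kh : ENNReal) * (d⁻¹ * Al + Dl) := mul_le_mul_right hXle _
    _ ≤ (Kh : ENNReal) * ((d⁻¹ + 1) * (Al + Dl)) := by
        apply mul_le_mul_right
        calc d⁻¹ * Al + Dl ≤ (d⁻¹ + 1) * Al + (d⁻¹ + 1) * Dl := by
              apply add_le_add
              · exact mul_le_mul_left le_self_add _
              · nth_rewrite 1 [← one_mul Dl]
                exact mul_le_mul_left le_add_self _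
          _ = (d⁻¹ + 1) * (Al + Dl) := (mul_add _ _ _).symm
    _ = c * (Al + Dl) := by rw [hc_def, mul_assoc]


set_option maxHeartbeats 1000000

/-- trace estimate on a bounded smooth domain `Ω ⊂ ℝ²`:
there is `C > 0` such that
`∫_{∂Ω} ψ² dH¹ ≤ C (‖ψ‖²_{L²(Ω)} + ‖∇ψ‖_{L²(Ω)} ‖ψ‖_{L²(Ω)})`
for every `ψ` continuously differentiable on an open neighbourhood of `closure Ω`.
The bounded smooth domain is described by a smooth defining function `F` with
nonvanishing gradient on `∂Ω = frontier Ω`. -/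
theorem domain_trace_estimate
    (Ω : Set E2) (F : E2 → ℝ) (hF : ContDiff ℝ (⊤ : ℕ∞) F)
    (hΩF : Ω = {x : E2 | F x < 0}) (hfr : frontier Ω = {x : E2 | F x = 0})
    (hgradF : ∀ x ∈ frontier Ω, gradient F x ≠ 0)
    (hbdd : Bornology.IsBounded Ω) (hconn : IsConnected Ω) :
    ∃ C > (0:ℝ), ∀ ψ : E2 → ℝ,
      (∃ U : Set E2, IsOpen U ∧ closure Ω ⊆ U ∧ ContDiffOn ℝ 1 ψ U) →
      (∫ x in frontier Ω, (ψ x) ^ 2 ∂(μH[1]))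
        ≤ C * ((∫ x in Ω, (ψ x) ^ 2)
          + Real.sqrt (∫ x in Ω, ‖gradient ψ x‖ ^ 2)
            * Real.sqrt (∫ x in Ω, (ψ x) ^ 2)) := by
  have hFc : Continuous F := hF.continuous
  have hΩo : IsOpen Ω := by rw [hΩF]; exact isOpen_lt hFc continuous_const
  have hfrc : IsCompact (frontier Ω) :=
    Metric.isCompact_of_isClosed_isBounded isClosed_frontier
      (hbdd.closure.subset frontier_subset_closure)
  have hloc := fun p (hp : p ∈ frontier Ω) =>
    local_trace Ω F hF hΩF hfr hp (hgradF p hp)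
  choose! V hVopen hpV c hctop hbound using hloc
  obtain ⟨T, hTsub, hTcover⟩ := hfrc.elim_nhds_subcover V
    (fun p hp => (hVopen p hp).mem_nhds (hpV p hp))
  set S : ENNReal := ∑ p ∈ T, c p with hS_def
  have hStop : S ≠ ⊤ := by
    rw [hS_def]
    exact ENNReal.sum_ne_top.mpr (fun p hpT => hctop p (hTsub p hpT))
  set CR : ℝ := 2 * S.toReal + 1 with hCR
  refine ⟨CR, by positivity, ?_⟩
  intro ψ hψex
  obtain ⟨U, hUopen, hclU, hψ⟩ := hψex
  have hΩU : Ω ⊆ U := subset_closure.trans hclU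
  have hclc : IsCompact (closure Ω) :=
    Metric.isCompact_of_isClosed_isBounded isClosed_closure hbdd.closure
  have hψc : ContinuousOn ψ U := hψ.continuousOn
  have hfdc : ContinuousOn (fderiv ℝ ψ) U := hψ.continuousOn_fderiv_of_isOpen hUopen le_rfl
  have hgradc : ContinuousOn (gradient ψ) U := by
    have heq : gradient ψ = fun x => (InnerProductSpace.toDual ℝ E2).symm (fderiv ℝ ψ x) := rfl
    rw [heq]
    exact (InnerProductSpace.toDual ℝ E2).symm.continuous.comp_continuousOn hfdc
  have hψcl : ContinuousOn ψ (closure Ω) := hψc.mono hclU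
  have hgradcl : ContinuousOn (gradient ψ) (closure Ω) := hgradc.mono hclU
  have hint_sq : IntegrableOn (fun x => (ψ x)^2) Ω volume :=
    (((hψcl.pow 2)).integrableOn_compact hclc).mono_set subset_closure
  have hint_grad2 : IntegrableOn (fun x => ‖gradient ψ x‖^2) Ω volume :=
    ((hgradcl.norm.pow 2).integrableOn_compact hclc).mono_set subset_closure
  have hint_D : IntegrableOn (fun x => |ψ x| * ‖gradient ψ x‖) Ω volume :=
    ((hψcl.abs.mul hgradcl.norm).integrableOn_compact hclc).mono_set subset_closure
  have hint_w : IntegrableOn (fun x => 2 * |ψ x| * ‖gradient ψ x‖) Ω volume :=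
    (((continuousOn_const.mul hψcl.abs).mul hgradcl.norm).integrableOn_compact
      hclc).mono_set subset_closure
  set A : ℝ := ∫ x in Ω, (ψ x)^2 with hA_def
  set B : ℝ := ∫ x in Ω, ‖gradient ψ x‖^2 with hB_def
  set D : ℝ := ∫ x in Ω, |ψ x| * ‖gradient ψ x‖ with hD_def
  set D2 : ℝ := ∫ x in Ω, 2 * |ψ x| * ‖gradient ψ x‖ with hD2_def
  have hA0 : 0 ≤ A := setIntegral_nonneg hΩo.measurableSet (fun x _ => sq_nonneg _)
  have hB0 : 0 ≤ B := setIntegral_nonneg hΩo.measurableSet (fun x _ => sq_nonneg _)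
  have hD0 : 0 ≤ D := setIntegral_nonneg hΩo.measurableSet (fun x _ => by positivity)
  have hD2eq : D2 = 2 * D := by
    rw [hD2_def, hD_def]
    rw [← integral_const_mul]
    congr 1
    funext x
    ring
  have hD20 : 0 ≤ D2 := by rw [hD2eq]; linarith
  -- Cauchy–Schwarz
  have hCS : D ≤ Real.sqrt B * Real.sqrt A := by
    rcases eq_or_lt_of_le hA0 with hAz | hApos
    · have hae : (fun x => (ψ x)^2) =ᵐ[volume.restrict Ω] 0 :=
        (integral_eq_zero_iff_of_nonneg (fun x => sq_nonneg _) hint_sq).mp hAz.symm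
      have hae2 : (fun x => |ψ x| * ‖gradient ψ x‖) =ᵐ[volume.restrict Ω] 0 := by
        filter_upwards [hae] with x hx
        have : (ψ x)^2 = 0 := hx
        have hx0 : ψ x = 0 := by nlinarith [sq_nonneg (ψ x)]
        simp [hx0]
      have : D = 0 := by
        rw [hD_def, integral_congr_ae hae2]
        simp
      rw [this]
      positivity
    rcases eq_or_lt_of_le hB0 with hBz | hBpos
    · have hae : (fun x => ‖gradient ψ x‖^2) =ᵐ[volume.restrict Ω] 0 :=
        (integral_eq_zero_iff_of_nonneg (fun x => sq_nonneg _) hint_grad2).mp hBz.symm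
      have hae2 : (fun x => |ψ x| * ‖gradient ψ x‖) =ᵐ[volume.restrict Ω] 0 := by
        filter_upwards [hae] with x hx
        have : ‖gradient ψ x‖^2 = 0 := hx
        have hx0 : ‖gradient ψ x‖ = 0 := by nlinarith [sq_nonneg ‖gradient ψ x‖]
        simp [hx0]
      have : D = 0 := by
        rw [hD_def, integral_congr_ae hae2]
        simp
      rw [this]
      positivity
    set lam : ℝ := Real.sqrt B / Real.sqrt A with hlam_def
    have hsA : 0 < Real.sqrt A := Real.sqrt_pos.mpr hApos
    have hsB : 0 < Real.sqrt B := Real.sqrt_pos.mpr hBpos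
    have hlam : 0 < lam := by positivity
    have hkey : ∀ x, |ψ x| * ‖gradient ψ x‖ ≤
        lam/2 * (ψ x)^2 + 1/(2*lam) * ‖gradient ψ x‖^2 := by
      intro x
      have := young_pair lam |ψ x| ‖gradient ψ x‖ hlam
      rwa [sq_abs] at this
    have hmono : D ≤ lam/2 * A + 1/(2*lam) * B := by
      have hle : D ≤ ∫ x in Ω, (lam/2 * (ψ x)^2 + 1/(2*lam) * ‖gradient ψ x‖^2) := by
        rw [hD_def]
        apply setIntegral_mono_on hint_D _ hΩo.measurableSet (fun x _ => hkey x)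
        exact (hint_sq.const_mul _).add (hint_grad2.const_mul _)
      rwa [integral_add (hint_sq.const_mul _) (hint_grad2.const_mul _),
        integral_const_mul, integral_const_mul, ← hA_def, ← hB_def] at hle
    calc D ≤ lam/2 * A + 1/(2*lam) * B := hmono
      _ = (Real.sqrt B / Real.sqrt A)/2 * Real.sqrt A^2
          + 1/(2*(Real.sqrt B / Real.sqrt A)) * Real.sqrt B^2 := by
          rw [hlam_def, Real.sq_sqrt hA0, Real.sq_sqrt hB0]
      _ = Real.sqrt B * Real.sqrt A := sqrt_combo _ _ hsA hsB
  -- measure subadditivity over the cover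
  have hmeasle : (μH[1] : Measure E2).restrict (frontier Ω) ≤
      ∑ p ∈ T, (μH[1] : Measure E2).restrict (frontier Ω ∩ V p) := by
    rw [Measure.le_iff]
    intro t ht
    rw [Measure.restrict_apply ht]
    have hsub : t ∩ frontier Ω ⊆ ⋃ p ∈ T, (t ∩ (frontier Ω ∩ V p)) := by
      rintro x ⟨hxt, hxf⟩
      have := hTcover hxf
      rw [Set.mem_iUnion₂] at this
      obtain ⟨p, hpT, hxV⟩ := this
      exact Set.mem_biUnion hpT ⟨hxt, hxf, hxV⟩
    calc μH[1] (t ∩ frontier Ω) ≤ μH[1] (⋃ p ∈ T, (t ∩ (frontier Ω ∩ V p))) :=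
          measure_mono hsub
      _ ≤ ∑ p ∈ T, μH[1] (t ∩ (frontier Ω ∩ V p)) := measure_biUnion_finset_le _ _
      _ = (∑ p ∈ T, (μH[1] : Measure E2).restrict (frontier Ω ∩ V p)) t := by
          rw [Measure.finset_sum_apply]
          exact Finset.sum_congr rfl (fun p _ => (Measure.restrict_apply ht).symm)
  set LHSl : ENNReal := ∫⁻ q in frontier Ω, ENNReal.ofReal ((ψ q)^2) ∂(μH[1]) with hLHSl_def
  have hAl : (∫⁻ q in Ω, ENNReal.ofReal ((ψ q)^2)) = ENNReal.ofReal A := by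
    rw [hA_def]
    exact (ofReal_integral_eq_lintegral_ofReal hint_sq
      (ae_of_all _ (fun x => sq_nonneg _))).symm
  have hDl : (∫⁻ q in Ω, ENNReal.ofReal (2 * |ψ q| * ‖gradient ψ q‖)) =
      ENNReal.ofReal D2 := by
    rw [hD2_def]
    exact (ofReal_integral_eq_lintegral_ofReal hint_w
      (ae_of_all _ (fun x => by positivity))).symm
  have hLHSle : LHSl ≤ S * (ENNReal.ofReal A + ENNReal.ofReal D2) := by
    calc LHSl ≤ ∫⁻ q, ENNReal.ofReal ((ψ q)^2)
          ∂(∑ p ∈ T, (μH[1] : Measure E2).restrict (frontier Ω ∩ V p)) :=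
          lintegral_mono' hmeasle le_rfl
      _ = ∑ p ∈ T, ∫⁻ q in frontier Ω ∩ V p, ENNReal.ofReal ((ψ q)^2) ∂(μH[1]) :=
          lintegral_finset_sum_measure T _ _
      _ ≤ ∑ p ∈ T, c p * ((∫⁻ q in Ω, ENNReal.ofReal ((ψ q)^2)) +
            (∫⁻ q in Ω, ENNReal.ofReal (2 * |ψ q| * ‖gradient ψ q‖))) :=
          Finset.sum_le_sum (fun p hpT => hbound p (hTsub p hpT) U ψ hUopen hclU hψ)
      _ = S * (ENNReal.ofReal A + ENNReal.ofReal D2) := by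
          rw [hAl, hDl, ← Finset.sum_mul]
  have hmeasψfr : AEStronglyMeasurable (fun q => (ψ q)^2)
      ((μH[1] : Measure E2).restrict (frontier Ω)) := by
    apply ContinuousOn.aestronglyMeasurable
    · exact (hψc.pow 2).mono (frontier_subset_closure.trans hclU)
    · exact isClosed_frontier.measurableSet
  have hfreq : (∫ q in frontier Ω, (ψ q)^2 ∂(μH[1] : Measure E2)) = LHSl.toReal := by
    rw [hLHSl_def, integral_eq_lintegral_of_nonneg_ae
      (ae_of_all _ (fun q => sq_nonneg _)) hmeasψfr]
  have hRHS : LHSl ≤ ENNReal.ofReal (S.toReal * (A + D2)) := by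
    calc LHSl ≤ S * (ENNReal.ofReal A + ENNReal.ofReal D2) := hLHSle
      _ = ENNReal.ofReal (S.toReal * (A + D2)) := by
          rw [← ENNReal.ofReal_add hA0 hD20]
          rw [← ENNReal.ofReal_toReal hStop]
          rw [← ENNReal.ofReal_mul ENNReal.toReal_nonneg]
          rw [ENNReal.ofReal_toReal hStop]
  have hfinal : (∫ q in frontier Ω, (ψ q)^2 ∂(μH[1] : Measure E2)) ≤ S.toReal * (A + D2) := by
    rw [hfreq]
    exact ENNReal.toReal_le_of_le_ofReal (by positivity) hRHS
  calc (∫ q in frontier Ω, (ψ q)^2 ∂(μH[1] : Measure E2)) ≤ S.toReal * (A + D2) := hfinal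
    _ ≤ CR * (A + Real.sqrt B * Real.sqrt A) := by
        have hD2le : D2 ≤ 2 * (Real.sqrt B * Real.sqrt A) := by
          rw [hD2eq]; linarith
        have h1 : A + D2 ≤ 2 * (A + Real.sqrt B * Real.sqrt A) := by linarith
        have hS0 : (0:ℝ) ≤ S.toReal := ENNReal.toReal_nonneg
        have h2 : (0:ℝ) ≤ A + Real.sqrt B * Real.sqrt A := by positivity
        calc S.toReal * (A + D2) ≤ S.toReal * (2 * (A + Real.sqrt B * Real.sqrt A)) :=
              mul_le_mul_of_nonneg_left h1 hS0
          _ = (2 * S.toReal) * (A + Real.sqrt B * Real.sqrt A) := by ring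
          _ ≤ CR * (A + Real.sqrt B * Real.sqrt A) := by
              apply mul_le_mul_of_nonneg_right _ h2
              rw [hCR]; linarith
end
end
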